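/- arXiv:1607.02184 — 11 statements merged into one kernel-verified Lean document; each statement's English description precedes it below -/
import Mathlib

section
/- Let X be a metric space, n ≥ 2, and p : Fin n → X a family of points. Suppose w : Fin n → Fin n → ℝ satisfies: w i j ≥ 0, w i j = w j i, w i i = 0, and ∑_j w i j ≥ 1 for every i. Then there exists w' : Fin n → Fin n → ℝ with w' i j ≥ 0, w' i j = w' j i, w' i i = 0, ∑_j w' i j = 1 for every i, and ∑_i ∑_j w' i j · dist (p i) (p j) ≤ ∑_i ∑_j w i j · dist (p i) (p j). (For distances obeying the triangle inequality, the dual linear program has an optimal solution in which the incident edge weights at each vertex total exactly one.) -/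
open Finset

/-- Indicator weight of the unordered pair `{a,b}`. -/
def pe {n : ℕ} (a b : Fin n) : Fin n → Fin n → ℝ :=
  fun x y => if (x = a ∧ y = b) ∨ (x = b ∧ y = a) then 1 else 0

lemma pe_sym {n : ℕ} (a b x y : Fin n) : pe a b x y = pe a b y x := by
  unfold pe
  congr 1
  simp only [eq_iff_iff]
  tauto

lemma pe_diag {n : ℕ} {a b : Fin n} (hab : a ≠ b) (x : Fin n) : pe a b x x = 0 := by
  unfold pe
  rcases eq_or_ne x a with rfl | h <;> simp_all [eq_comm]

lemma pe_row_mul {n : ℕ} {a b : Fin n} (hab : a ≠ b) (f : Fin n → Fin n → ℝ) (x : Fin n) :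
    ∑ y, pe a b x y * f x y = (if x = a then f a b else 0) + (if x = b then f b a else 0) := by
  by_cases hxa : x = a <;> by_cases hxb : x = b <;>
    simp_all [pe, Finset.sum_ite_eq, Finset.sum_ite_eq', hab, hab.symm, ite_and]

lemma pe_row {n : ℕ} {a b : Fin n} (hab : a ≠ b) (x : Fin n) :
    ∑ y, pe a b x y = (if x = a then (1:ℝ) else 0) + (if x = b then 1 else 0) := by
  have := pe_row_mul hab (fun _ _ => (1:ℝ)) x
  simpa using this

lemma pe_cost {n : ℕ} {a b : Fin n} (hab : a ≠ b) (c : Fin n → Fin n → ℝ)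
    (hc : ∀ u v, c u v = c v u) :
    ∑ x, ∑ y, pe a b x y * c x y = 2 * c a b := by
  have h : ∀ x, ∑ y, pe a b x y * c x y
      = (if x = a then c a b else 0) + (if x = b then c b a else 0) :=
    fun x => pe_row_mul hab c x
  simp_rw [h]
  rw [Finset.sum_add_distrib]
  simp [Finset.sum_ite_eq, hc a b]
  ring

/-- Nonnegativity of the short-cut perturbation. -/
lemma shortcut_nonneg {n : ℕ} {i j k x y : Fin n} (hij : i ≠ j) (hik : i ≠ k) (hjk : j ≠ k)
    (v : Fin n → Fin n → ℝ) (hv0 : ∀ a b, 0 ≤ v a b) (hvsym : ∀ a b, v a b = v b a)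
    {ε : ℝ} (hε0 : 0 ≤ ε) (hεij : ε ≤ v i j) (hεik : ε ≤ v i k) :
    0 ≤ v x y + ε * pe j k x y - ε * pe i j x y - ε * pe i k x y := by
  unfold pe
  by_cases hxi : x = i <;> by_cases hxj : x = j <;> by_cases hxk : x = k <;>
    by_cases hyi : y = i <;> by_cases hyj : y = j <;> by_cases hyk : y = k <;>
    simp_all [hvsym j i, hvsym k i, hvsym k j] <;>
    linarith [hv0 x y, hv0 i j, hv0 i k, hv0 j k]

/-- Nonnegativity of the single-edge reduction. -/
lemma reduce_nonneg {n : ℕ} {i j x y : Fin n} (hij : i ≠ j)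
    (v : Fin n → Fin n → ℝ) (hv0 : ∀ a b, 0 ≤ v a b) (hvsym : ∀ a b, v a b = v b a)
    {ε : ℝ} (hε0 : 0 ≤ ε) (hεij : ε ≤ v i j) :
    0 ≤ v x y - ε * pe i j x y := by
  unfold pe
  by_cases hxi : x = i <;> by_cases hxj : x = j <;>
    by_cases hyi : y = i <;> by_cases hyj : y = j <;>
    simp_all [hvsym j i] <;>
    linarith [hv0 x y, hv0 i j]

lemma ite_row_arith {n : ℕ} {i j k x : Fin n} (hij : i ≠ j) (hik : i ≠ k) (hjk : j ≠ k)
    (ε S : ℝ) :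
    S + ε * ((if x = j then (1:ℝ) else 0) + (if x = k then 1 else 0))
      - ε * ((if x = i then (1:ℝ) else 0) + (if x = j then 1 else 0))
      - ε * ((if x = i then (1:ℝ) else 0) + (if x = k then 1 else 0))
      = S - (if x = i then 2 * ε else 0) := by
  by_cases h1 : x = i <;> by_cases h2 : x = j <;> by_cases h3 : x = k <;>
    simp_all <;> ring

lemma ite_row_arith2 {n : ℕ} {i j x : Fin n} (hij : i ≠ j) (ε S : ℝ) :
    S - ε * ((if x = i then (1:ℝ) else 0) + (if x = j then 1 else 0))
      = S - (if x = i then ε else 0) - (if x = j then ε else 0) := by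
  by_cases h1 : x = i <;> by_cases h2 : x = j <;> simp_all <;> ring

lemma sum2_comb {n : ℕ} (A B D E : Fin n → Fin n → ℝ) (ε : ℝ) :
    ∑ x, ∑ y, (A x y + ε * B x y - ε * D x y - ε * E x y)
      = (∑ x, ∑ y, A x y) + ε * (∑ x, ∑ y, B x y)
        - ε * (∑ x, ∑ y, D x y) - ε * (∑ x, ∑ y, E x y) := by
  simp_rw [Finset.sum_sub_distrib, Finset.sum_add_distrib, ← Finset.mul_sum]

lemma sum2_sub {n : ℕ} (A D : Fin n → Fin n → ℝ) (ε : ℝ) :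
    ∑ x, ∑ y, (A x y - ε * D x y)
      = (∑ x, ∑ y, A x y) - ε * (∑ x, ∑ y, D x y) := by
  simp_rw [Finset.sum_sub_distrib, ← Finset.mul_sum]

set_option maxHeartbeats 1000000 in
/-- For distances obeying the triangle inequality, any fractional cycle cover can
be converted into one in which the incident edge weights at each vertex total
exactly one, without increasing the cost. -/
theorem exists_tight_fractional_cycle_cover
    {X : Type*} [MetricSpace X] (n : ℕ) (hn : 2 ≤ n) (p : Fin n → X)
    (w : Fin n → Fin n → ℝ)
    (hw0 : ∀ i j, 0 ≤ w i j)
    (hwsym : ∀ i j, w i j = w j i)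
    (hwdiag : ∀ i, w i i = 0)
    (hwdeg : ∀ i, 1 ≤ ∑ j, w i j) :
    ∃ w' : Fin n → Fin n → ℝ,
      (∀ i j, 0 ≤ w' i j) ∧
      (∀ i j, w' i j = w' j i) ∧
      (∀ i, w' i i = 0) ∧
      (∀ i, ∑ j, w' i j = 1) ∧
      ∑ i, ∑ j, w' i j * dist (p i) (p j) ≤ ∑ i, ∑ j, w i j * dist (p i) (p j) := by
  classical
  set c : Fin n → Fin n → ℝ := fun i j => dist (p i) (p j) with hcdef
  have hcsym : ∀ u v : Fin n, c u v = c v u := fun u v => dist_comm _ _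
  have hcnn : ∀ u v : Fin n, 0 ≤ c u v := fun u v => dist_nonneg
  set C : ℝ := ∑ i, ∑ j, w i j * c i j with hC
  set M : ℝ := ∑ i, ∑ j, w i j with hM
  set K : Set (Fin n → Fin n → ℝ) :=
    {v | ∀ i j, 0 ≤ v i j} ∩ {v | ∀ i j, v i j = v j i} ∩ {v | ∀ i, v i i = 0} ∩
    {v | ∀ i, 1 ≤ ∑ j, v i j} ∩ {v | ∑ i, ∑ j, v i j ≤ M} ∩
    {v | ∑ i, ∑ j, v i j * c i j ≤ C} with hKdef
  have hmemK : ∀ v : Fin n → Fin n → ℝ, v ∈ K ↔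
      (∀ i j, 0 ≤ v i j) ∧ (∀ i j, v i j = v j i) ∧ (∀ i, v i i = 0) ∧
      (∀ i, 1 ≤ ∑ j, v i j) ∧ (∑ i, ∑ j, v i j ≤ M) ∧ (∑ i, ∑ j, v i j * c i j ≤ C) := by
    intro v
    simp only [hKdef, Set.mem_inter_iff, Set.mem_setOf_eq]
    tauto
  have hwK : w ∈ K := (hmemK w).mpr ⟨hw0, hwsym, hwdiag, hwdeg, le_refl _, le_refl _⟩
  have hev : ∀ (i j : Fin n), Continuous fun v : Fin n → Fin n → ℝ => v i j :=
    fun i j => (continuous_apply j).comp (continuous_apply i)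
  have hsumc : ∀ i : Fin n, Continuous fun v : Fin n → Fin n → ℝ => ∑ j, v i j :=
    fun i => continuous_finset_sum _ fun j _ => hev i j
  have htotc : Continuous fun v : Fin n → Fin n → ℝ => ∑ i, ∑ j, v i j :=
    continuous_finset_sum _ fun i _ => hsumc i
  have hcostc : Continuous fun v : Fin n → Fin n → ℝ => ∑ i, ∑ j, v i j * c i j :=
    continuous_finset_sum _ fun i _ => continuous_finset_sum _ fun j _ =>
      (hev i j).mul continuous_const
  have hclosed : IsClosed K := by
    refine (((((?_ : IsClosed _).inter ?_).inter ?_).inter ?_).inter ?_).inter ?_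
    · have : {v : Fin n → Fin n → ℝ | ∀ i j, 0 ≤ v i j} = ⋂ i, ⋂ j, {v | 0 ≤ v i j} := by
        ext v; simp
      rw [this]
      exact isClosed_iInter fun i => isClosed_iInter fun j =>
        isClosed_le continuous_const (hev i j)
    · have : {v : Fin n → Fin n → ℝ | ∀ i j, v i j = v j i} = ⋂ i, ⋂ j, {v | v i j = v j i} := by
        ext v; simp
      rw [this]
      exact isClosed_iInter fun i => isClosed_iInter fun j => isClosed_eq (hev i j) (hev j i)
    · have : {v : Fin n → Fin n → ℝ | ∀ i, v i i = 0} = ⋂ i, {v | v i i = 0} := by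
        ext v; simp
      rw [this]
      exact isClosed_iInter fun i => isClosed_eq (hev i i) continuous_const
    · have : {v : Fin n → Fin n → ℝ | ∀ i, 1 ≤ ∑ j, v i j} = ⋂ i, {v | 1 ≤ ∑ j, v i j} := by
        ext v; simp
      rw [this]
      exact isClosed_iInter fun i => isClosed_le continuous_const (hsumc i)
    · exact isClosed_le htotc continuous_const
    · exact isClosed_le hcostc continuous_const
  have hsub : K ⊆ Set.pi Set.univ fun _ => Set.pi Set.univ fun _ => Set.Icc (0:ℝ) M := by
    intro v hv
    obtain ⟨h0, hsym, hdiag, hdeg, hmass, hcost⟩ := (hmemK v).mp hv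
    rw [Set.mem_univ_pi]
    intro i
    rw [Set.mem_univ_pi]
    intro j
    refine ⟨h0 i j, ?_⟩
    calc v i j ≤ ∑ j, v i j := Finset.single_le_sum (fun k _ => h0 i k) (Finset.mem_univ j)
      _ ≤ ∑ i, ∑ j, v i j :=
          Finset.single_le_sum (f := fun i => ∑ j, v i j)
            (fun k _ => Finset.sum_nonneg fun l _ => h0 k l) (Finset.mem_univ i)
      _ ≤ M := hmass
  have hKc : IsCompact K :=
    IsCompact.of_isClosed_subset
      (isCompact_univ_pi fun _ => isCompact_univ_pi fun _ => isCompact_Icc) hclosed hsub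
  obtain ⟨v, hvK, hvmin'⟩ := hKc.exists_isMinOn ⟨w, hwK⟩ htotc.continuousOn
  have hvmin : ∀ u ∈ K, ∑ x, ∑ y, v x y ≤ ∑ x, ∑ y, u x y := fun u hu => hvmin' hu
  obtain ⟨hv0, hvsym, hvdiag, hvdeg, hvmass, hvcost⟩ := (hmemK v).mp hvK
  -- Key claim: every degree is exactly 1
  have hdeg1 : ∀ i, ∑ j, v i j = 1 := by
    intro i
    by_contra hne
    have hd : 1 < ∑ j, v i j := lt_of_le_of_ne (hvdeg i) (Ne.symm hne)
    have hj : ∃ j, 0 < v i j := by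
      by_contra h
      push_neg at h
      have : ∑ j, v i j = 0 := Finset.sum_eq_zero fun j _ => le_antisymm (h j) (hv0 i j)
      linarith
    obtain ⟨j, hj⟩ := hj
    have hij : i ≠ j := by
      rintro rfl
      rw [hvdiag i] at hj
      exact lt_irrefl _ hj
    by_cases hk : ∃ k, k ≠ j ∧ 0 < v i k
    · -- Case A: two distinct positive neighbours; shortcut through i
      obtain ⟨k, hkj, hk⟩ := hk
      have hik : i ≠ k := by
        rintro rfl
        rw [hvdiag i] at hk
        exact lt_irrefl _ hk
      have hjk : j ≠ k := fun h => hkj h.symm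
      set ε : ℝ := min (min (v i j) (v i k)) ((∑ j, v i j - 1) / 2) with hεdef
      have hεpos : 0 < ε := lt_min (lt_min hj hk) (by linarith)
      have hεij : ε ≤ v i j := (min_le_left _ _).trans (min_le_left _ _)
      have hεik : ε ≤ v i k := (min_le_left _ _).trans (min_le_right _ _)
      have hεd : ε ≤ (∑ j, v i j - 1) / 2 := min_le_right _ _
      set v' : Fin n → Fin n → ℝ :=
        fun x y => v x y + ε * pe j k x y - ε * pe i j x y - ε * pe i k x y with hv'def
      have hrow : ∀ x, ∑ y, v' x y = (∑ y, v x y) - (if x = i then 2 * ε else 0) := by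
        intro x
        have h1 : ∑ y, v' x y = (∑ y, v x y) + ε * (∑ y, pe j k x y)
            - ε * (∑ y, pe i j x y) - ε * (∑ y, pe i k x y) := by
          simp only [hv'def]
          rw [Finset.sum_sub_distrib, Finset.sum_sub_distrib, Finset.sum_add_distrib,
            ← Finset.mul_sum, ← Finset.mul_sum, ← Finset.mul_sum]
        rw [h1, pe_row hjk x, pe_row hij x, pe_row hik x]
        exact ite_row_arith hij hik hjk ε _
      have hv'0 : ∀ x y, 0 ≤ v' x y :=
        fun x y => shortcut_nonneg hij hik hjk v hv0 hvsym hεpos.le hεij hεik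
      have hv'sym : ∀ x y, v' x y = v' y x := by
        intro x y
        simp only [hv'def]
        rw [pe_sym j k x y, pe_sym i j x y, pe_sym i k x y, hvsym x y]
      have hv'diag : ∀ x, v' x x = 0 := by
        intro x
        simp only [hv'def]
        rw [pe_diag hjk, pe_diag hij, pe_diag hik, hvdiag x]
        ring
      have hv'deg : ∀ x, 1 ≤ ∑ y, v' x y := by
        intro x
        rw [hrow x]
        by_cases h : x = i
        · subst h; rw [if_pos rfl]; linarith
        · rw [if_neg h]; linarith [hvdeg x]
      have hv'mass : ∑ x, ∑ y, v' x y = (∑ x, ∑ y, v x y) - 2 * ε := by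
        simp_rw [hrow]
        rw [Finset.sum_sub_distrib, Finset.sum_ite_eq']
        simp
      have hv'cost : ∑ x, ∑ y, v' x y * c x y
          = (∑ x, ∑ y, v x y * c x y) + ε * (2 * c j k) - ε * (2 * c i j) - ε * (2 * c i k) := by
        have h1 : ∑ x, ∑ y, v' x y * c x y
            = ∑ x, ∑ y, (v x y * c x y + ε * (pe j k x y * c x y)
              - ε * (pe i j x y * c x y) - ε * (pe i k x y * c x y)) :=
          Finset.sum_congr rfl fun x _ => Finset.sum_congr rfl fun y _ => by
            simp only [hv'def]; ring
        rw [h1, sum2_comb, pe_cost hjk c hcsym, pe_cost hij c hcsym, pe_cost hik c hcsym]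
      have htri : c j k ≤ c i j + c i k := by
        have h := dist_triangle (p j) (p i) (p k)
        rw [dist_comm (p j) (p i)] at h
        exact h
      have hv'K : v' ∈ K := by
        refine (hmemK v').mpr ⟨hv'0, hv'sym, hv'diag, hv'deg, ?_, ?_⟩
        · rw [hv'mass]; linarith
        · rw [hv'cost]; nlinarith [hεpos.le, hcnn i j, hcnn i k]
      have hle := hvmin v' hv'K
      rw [hv'mass] at hle
      linarith
    · -- Case B: a single positive neighbour j carrying all the weight
      push_neg at hk
      have hzero : ∀ b, b ≠ j → v i b = 0 :=
        fun b hb => le_antisymm (hk b hb) (hv0 i b)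
      have hsumj : ∑ y, v i y = v i j :=
        Finset.sum_eq_single_of_mem j (Finset.mem_univ j) fun b _ hb => hzero b hb
      have hvij : 1 < v i j := by rw [← hsumj]; exact hd
      have hdegj : v i j ≤ ∑ y, v j y := by
        rw [hvsym i j]
        exact Finset.single_le_sum (fun y _ => hv0 j y) (Finset.mem_univ i)
      set ε : ℝ := min (v i j) (∑ y, v j y) - 1 with hεdef
      have hεpos : 0 < ε := by
        have : 1 < min (v i j) (∑ y, v j y) := lt_min hvij (lt_of_lt_of_le hvij hdegj)
        linarith
      have hεij : ε ≤ v i j - 1 := by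
        have := min_le_left (v i j) (∑ y, v j y)
        linarith
      have hεj : ε ≤ (∑ y, v j y) - 1 := by
        have := min_le_right (v i j) (∑ y, v j y)
        linarith
      set v' : Fin n → Fin n → ℝ := fun x y => v x y - ε * pe i j x y with hv'def
      have hrow : ∀ x, ∑ y, v' x y
          = (∑ y, v x y) - (if x = i then ε else 0) - (if x = j then ε else 0) := by
        intro x
        have h1 : ∑ y, v' x y = (∑ y, v x y) - ε * (∑ y, pe i j x y) := by
          simp only [hv'def]
          rw [Finset.sum_sub_distrib, ← Finset.mul_sum]
        rw [h1, pe_row hij x]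
        exact ite_row_arith2 hij ε _
      have hv'0 : ∀ x y, 0 ≤ v' x y :=
        fun x y => reduce_nonneg hij v hv0 hvsym hεpos.le (by linarith)
      have hv'sym : ∀ x y, v' x y = v' y x := by
        intro x y
        simp only [hv'def]
        rw [pe_sym i j x y, hvsym x y]
      have hv'diag : ∀ x, v' x x = 0 := by
        intro x
        simp only [hv'def]
        rw [pe_diag hij, hvdiag x]
        ring
      have hv'deg : ∀ x, 1 ≤ ∑ y, v' x y := by
        intro x
        rw [hrow x]
        by_cases h1 : x = i
        · subst h1
          rw [if_pos rfl, if_neg hij, hsumj]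
          linarith
        · rw [if_neg h1]
          by_cases h2 : x = j
          · subst h2
            rw [if_pos rfl]
            linarith
          · rw [if_neg h2]
            linarith [hvdeg x]
      have hv'mass : ∑ x, ∑ y, v' x y = (∑ x, ∑ y, v x y) - 2 * ε := by
        simp_rw [hrow]
        rw [Finset.sum_sub_distrib, Finset.sum_sub_distrib, Finset.sum_ite_eq',
          Finset.sum_ite_eq']
        simp
        ring
      have hv'cost : ∑ x, ∑ y, v' x y * c x y
          = (∑ x, ∑ y, v x y * c x y) - ε * (2 * c i j) := by
        have h1 : ∑ x, ∑ y, v' x y * c x y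
            = ∑ x, ∑ y, (v x y * c x y - ε * (pe i j x y * c x y)) :=
          Finset.sum_congr rfl fun x _ => Finset.sum_congr rfl fun y _ => by
            simp only [hv'def]; ring
        rw [h1, sum2_sub, pe_cost hij c hcsym]
      have hv'K : v' ∈ K := by
        refine (hmemK v').mpr ⟨hv'0, hv'sym, hv'diag, hv'deg, ?_, ?_⟩
        · rw [hv'mass]; linarith
        · rw [hv'cost]; nlinarith [hεpos.le, hcnn i j]
      have hle := hvmin v' hv'K
      rw [hv'mass] at hle
      linarith
  exact ⟨v, hv0, hvsym, hvdiag, hdeg1, hvcost⟩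
end

section
/- Let X be a metric space, n ≥ 2, and p : Fin n → X a family of points. Then there exist a feasible system of radii r : Fin n → ℝ and a derangement σ of Fin n such that 2 · ∑_i r i = ∑_i dist (p i) (p (σ i)). Consequently, the maximum sum of radii of nonoverlapping balls centered at the points p i equals half of the minimum, over all derangements σ, of ∑_i dist (p i) (p (σ i)) (half the weight of a minimum cycle cover of the complete geometric graph on the points). -/
/-!
Every packing `r` and derangement `σ` satisfy `2 * ∑ r i ≤ ∑ dist (p i) (p (σ i))`, since
each term `r i + r (σ i)` is bounded by the corresponding distance; so it suffices to find a
pair with equality.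

Take `r` maximizing `∑ r i` over the compact set of nonnegative packings. It is maximal even among
packings with negative radii: a negative radius can be raised to `0` at a net gain, because by the
triangle inequality at most one other ball then has to shrink. At such a maximum the graph of tight
pairs (`r i + r j = dist (p i) (p j)`) satisfies Hall's condition, since otherwise moving `r` in the
direction `1_S - 1_{N(S)}` would increase the sum. A Hall matching of this graph is a derangement
along tight pairs, which attains equality.
-/

open Finset Filter Topology Equiv

section

variable {ι X : Type*} [PseudoMetricSpace X] (p : ι → X)

def IsPacking (r : ι → ℝ) : Prop :=
  ∀ i j, i ≠ j → r i + r j ≤ dist (p i) (p j)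

variable {p}

theorem two_mul_sum_eq_sum_add_comp [Fintype ι] (r : ι → ℝ) (σ : Perm ι) :
    2 * ∑ i, r i = ∑ i, (r i + r (σ i)) := by
  rw [sum_add_distrib, Equiv.sum_comp σ]
  ring

theorem IsPacking.two_mul_sum_le [Fintype ι] {r : ι → ℝ} (hr : IsPacking p r) {σ : Perm ι}
    (hσ : σ ∈ derangements ι) : 2 * ∑ i, r i ≤ ∑ i, dist (p i) (p (σ i)) := by
  rw [two_mul_sum_eq_sum_add_comp r σ]
  exact sum_le_sum fun i _ => hr i (σ i) (hσ i).symm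

variable (p) in
def raiseAt [DecidableEq ι] (w : ι → ℝ) (i : ι) : ι → ℝ :=
  fun k => if k = i then max (w i) 0 else min (w k) (dist (p i) (p k))

@[simp]
theorem raiseAt_self [DecidableEq ι] (w : ι → ℝ) (i : ι) : raiseAt p w i i = max (w i) 0 :=
  if_pos rfl

theorem raiseAt_of_ne [DecidableEq ι] (w : ι → ℝ) {i k : ι} (hk : k ≠ i) :
    raiseAt p w i k = min (w k) (dist (p i) (p k)) :=
  if_neg hk

theorem IsPacking.isPacking_raiseAt [DecidableEq ι] {w : ι → ℝ} (hw : IsPacking p w)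
    (i : ι) :
    IsPacking p (raiseAt p w i) := by
  have key : ∀ k, k ≠ i → max (w i) 0 + min (w k) (dist (p i) (p k)) ≤ dist (p i) (p k) :=
    fun k hk => by
      rcases le_total (w i) 0 with h | h
      · simp [max_eq_right h]
      · rw [max_eq_left h]
        linarith [min_le_left (w k) (dist (p i) (p k)), hw i k hk.symm]
  intro a b hab
  rcases eq_or_ne a i with rfl | ha
  · rw [raiseAt_self, raiseAt_of_ne w hab.symm]
    exact key b hab.symm
  rcases eq_or_ne b i with rfl | hb
  · rw [raiseAt_self, raiseAt_of_ne w ha, add_comm, dist_comm (p a)]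
    exact key a ha
  rw [raiseAt_of_ne w ha, raiseAt_of_ne w hb]
  linarith [min_le_left (w a) (dist (p i) (p a)), min_le_left (w b) (dist (p i) (p b)),
    hw a b hab]

/-- By the triangle inequality at most one radius exceeds its distance to `p i`, and by at most
`-w i`. -/
theorem IsPacking.sum_le_sum_raiseAt [Fintype ι] [DecidableEq ι] {w : ι → ℝ}
    (hw : IsPacking p w) (i : ι) : ∑ k, w k ≤ ∑ k, raiseAt p w i k := by
  rw [← sub_nonneg, ← sum_sub_distrib]
  have hcut : ∀ k, k ≠ i → w k ≤ dist (p i) (p k) → raiseAt p w i k - w k = 0 :=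
    fun k hk hle => by rw [raiseAt_of_ne w hk, min_eq_left hle, sub_self]
  rcases le_total 0 (w i) with hi | hi
  · refine (sum_eq_zero fun k _ => ?_).ge
    rcases eq_or_ne k i with rfl | hk
    · rw [raiseAt_self, max_eq_left hi, sub_self]
    · exact hcut k hk (by linarith [hw i k hk.symm])
  have hi' : raiseAt p w i i - w i = - w i := by rw [raiseAt_self, max_eq_right hi, zero_sub]
  by_cases h : ∃ k ≠ i, dist (p i) (p k) < w k
  · obtain ⟨k, hk, hlt⟩ := h
    rw [sum_eq_add_of_mem i k (mem_univ i) (mem_univ k) hk.symm fun l _ hl => hcut l hl.1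
      (not_lt.1 fun hlt' => by
        linarith [hw k l (Ne.symm hl.2), dist_triangle_left (p k) (p l) (p i)])]
    rw [hi', raiseAt_of_ne w hk, min_eq_right hlt.le]
    linarith [hw i k hk.symm]
  · push Not at h
    rw [sum_eq_single_of_mem i (mem_univ i) fun k _ hk => hcut k hk (h k hk), hi']
    linarith

theorem IsPacking.exists_nonneg_sum_le [Fintype ι] [DecidableEq ι] {w : ι → ℝ}
    (hw : IsPacking p w) :
    ∃ r : ι → ℝ, (∀ i, 0 ≤ r i) ∧ IsPacking p r ∧ ∑ i, w i ≤ ∑ i, r i := by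
  suffices ∀ s : Finset ι, ∀ w : ι → ℝ, IsPacking p w → (∀ i ∉ s, 0 ≤ w i) →
      ∃ r : ι → ℝ, (∀ i, 0 ≤ r i) ∧ IsPacking p r ∧ ∑ i, w i ≤ ∑ i, r i from
    this univ w hw fun i hi => absurd (mem_univ i) hi
  intro s
  induction s using Finset.induction_on with
  | empty => exact fun w hw hw0 => ⟨w, fun i => hw0 i (notMem_empty i), hw, le_rfl⟩
  | insert i s _ ih =>
    intro w hw hw0
    obtain ⟨r, hr0, hr, hle⟩ := ih _ (hw.isPacking_raiseAt i) fun k hk => by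
      rcases eq_or_ne k i with rfl | hki
      · exact (raiseAt_self (p := p) w k).symm ▸ le_max_right _ _
      · rw [raiseAt_of_ne w hki]
        exact le_min (hw0 k (by simp [hki, hk])) dist_nonneg
    exact ⟨r, hr0, hr, (hw.sum_le_sum_raiseAt i).trans hle⟩

variable (p) in
theorem isClosed_setOf_isPacking : IsClosed {w : ι → ℝ | IsPacking p w} := by
  simp only [IsPacking, Set.ofPred_forall]
  exact isClosed_iInter fun i => isClosed_iInter fun j => isClosed_iInter fun _ =>
    isClosed_le (by fun_prop) continuous_const

variable (p) in
theorem isCompact_setOf_nonneg_isPacking [Finite ι] [Nontrivial ι] :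
    IsCompact {w : ι → ℝ | (∀ i, 0 ≤ w i) ∧ IsPacking p w} := by
  choose j hj using exists_ne (α := ι)
  refine (isCompact_Icc (a := 0) (b := fun i => dist (p i) (p (j i)))).of_isClosed_subset
    (isClosed_Ici.inter (isClosed_setOf_isPacking p)) fun w ⟨hw0, hw⟩ =>
      ⟨hw0, fun i => by linarith [hw i (j i) (hj i).symm, hw0 (j i)]⟩

variable (p) in
theorem exists_nonneg_isPacking_isMaxOn_sum [Fintype ι] [DecidableEq ι] [Nontrivial ι] :
    ∃ r : ι → ℝ, (∀ i, 0 ≤ r i) ∧ IsPacking p r ∧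
      IsMaxOn (fun w : ι → ℝ => ∑ i, w i) {w | IsPacking p w} r := by
  obtain ⟨r, ⟨hr0, hr⟩, hmax⟩ := (isCompact_setOf_nonneg_isPacking p).exists_isMaxOn
    ⟨0, fun _ => le_rfl, fun i j _ => by simp⟩
    (by fun_prop : Continuous fun w : ι → ℝ => ∑ i, w i).continuousOn
  refine ⟨r, hr0, hr, fun w hw => ?_⟩
  obtain ⟨w', hw'0, hw', hle⟩ := IsPacking.exists_nonneg_sum_le hw
  exact hle.trans (hmax ⟨hw'0, hw'⟩)

theorem IsPacking.eventually_isPacking_add_smul [Finite ι] {r δ : ι → ℝ} (hr : IsPacking p r)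
    (hδ : ∀ i j, i ≠ j → r i + r j = dist (p i) (p j) → δ i + δ j ≤ 0) :
    ∀ᶠ ε in 𝓝[>] (0 : ℝ), IsPacking p (r + ε • δ) := by
  have hpair : ∀ i j, ∀ᶠ ε in 𝓝[>] (0 : ℝ),
      i ≠ j → (r + ε • δ) i + (r + ε • δ) j ≤ dist (p i) (p j) := by
    intro i j
    by_cases hij : i = j
    · exact Eventually.of_forall fun _ h => absurd hij h
    rcases (hr i j hij).eq_or_lt with htight | hslack
    · filter_upwards [self_mem_nhdsWithin] with ε (hε : 0 < ε) _
      simp only [Pi.add_apply, Pi.smul_apply, smul_eq_mul]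
      nlinarith [hδ i j hij htight]
    · have hcont : Continuous fun ε : ℝ => (r + ε • δ) i + (r + ε • δ) j := by fun_prop
      filter_upwards [nhdsWithin_le_nhds (hcont.continuousAt.eventually_lt continuousAt_const
        (by simpa using hslack))] with ε hε _ using hε.le
  exact eventually_all.2 fun i => eventually_all.2 (hpair i)

/-- If the tight graph violated Hall's condition on `S`, growing the radii on `S` and shrinking
them on its tight neighbourhood would increase the sum. -/
theorem IsPacking.exists_derangement_two_mul_sum_eq [Fintype ι] [DecidableEq ι] {r : ι → ℝ}
    (hr : IsPacking p r)
    (hmax : IsLocalMaxOn (fun w : ι → ℝ => ∑ i, w i) {w | IsPacking p w} r) :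
    ∃ σ ∈ derangements ι, 2 * ∑ i, r i = ∑ i, dist (p i) (p (σ i)) := by
  let t : ι → Finset ι := fun i => {j | j ≠ i ∧ r i + r j = dist (p i) (p j)}
  suffices hall : ∀ S : Finset ι, #S ≤ #(S.biUnion t) by
    obtain ⟨f, hf, hft⟩ := (all_card_le_biUnion_card_iff_exists_injective t).1 hall
    have hft' := fun i => (mem_filter.1 (hft i)).2
    let σ := Equiv.ofBijective f hf.bijective_of_finite
    refine ⟨σ, fun i => (hft' i).1, ?_⟩
    rw [two_mul_sum_eq_sum_add_comp r σ]
    exact sum_congr rfl fun i _ => (hft' i).2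
  by_contra! ⟨S, hS⟩
  set N := S.biUnion t
  let δ : ι → ℝ := fun i => (if i ∈ S then 1 else 0) - (if i ∈ N then 1 else 0)
  have hδ : ∀ i j, i ≠ j → r i + r j = dist (p i) (p j) → δ i + δ j ≤ 0 := by
    intro i j hij htight
    have hj : i ∈ S → j ∈ N := fun hi => mem_biUnion.2 ⟨i, hi, by
      simp [t, hij.symm, htight]⟩
    have hi : j ∈ S → i ∈ N := fun hj => mem_biUnion.2 ⟨j, hj, by
      simp [t, hij, add_comm (r j), dist_comm (p j), htight]⟩
    simp only [δ]
    split_ifs <;> simp_all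
  have hsum : ∀ ε : ℝ, ∑ i, (r + ε • δ) i = ∑ i, r i + ε * (#S - #N) := fun ε => by
    simp [δ, sum_add_distrib, sum_sub_distrib, ← mul_sum]
  have hgrow : ∀ᶠ ε in 𝓝[>] (0 : ℝ), ∑ i, r i < ∑ i, (r + ε • δ) i := by
    filter_upwards [self_mem_nhdsWithin] with ε (hε : 0 < ε)
    rw [hsum]
    have : (#N : ℝ) < #S := by exact_mod_cast hS
    nlinarith
  have hto : Tendsto (fun ε : ℝ => r + ε • δ) (𝓝[>] 0) (𝓝[{w | IsPacking p w}] r) := by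
    refine tendsto_nhdsWithin_iff.2 ⟨?_, hr.eventually_isPacking_add_smul hδ⟩
    have hcont : Continuous fun ε : ℝ => r + ε • δ := by fun_prop
    exact tendsto_nhdsWithin_of_tendsto_nhds (by simpa using hcont.tendsto 0)
  obtain ⟨ε, hle, hlt⟩ := ((hto.eventually hmax).and hgrow).exists
  exact hle.not_gt hlt

end

/-- Strong duality: there exist a feasible system of radii and a derangement
(cycle cover) whose weight is exactly twice the sum of radii; consequently the
maximum sum of radii of nonoverlapping balls equals half the minimum weight of
a cycle cover of the complete geometric graph on the points. -/
theorem max_radius_sum_eq_half_min_cycle_cover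
    {X : Type*} [MetricSpace X] (n : ℕ) (hn : 2 ≤ n) (p : Fin n → X) :
    ∃ (r : Fin n → ℝ) (σ : Equiv.Perm (Fin n)),
      (∀ i, 0 ≤ r i) ∧
      (∀ i j, i ≠ j → r i + r j ≤ dist (p i) (p j)) ∧
      (∀ i, σ i ≠ i) ∧
      2 * ∑ i, r i = ∑ i, dist (p i) (p (σ i)) ∧
      (∀ r' : Fin n → ℝ, (∀ i, 0 ≤ r' i) →
        (∀ i j, i ≠ j → r' i + r' j ≤ dist (p i) (p j)) →
        ∑ i, r' i ≤ ∑ i, r i) ∧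
      (∀ σ' : Equiv.Perm (Fin n), (∀ i, σ' i ≠ i) →
        ∑ i, dist (p i) (p (σ i)) ≤ ∑ i, dist (p i) (p (σ' i))) := by
  have : Nontrivial (Fin n) := Fin.nontrivial_iff_two_le.2 hn
  obtain ⟨r, hr0, hr, hmax⟩ := exists_nonneg_isPacking_isMaxOn_sum p
  obtain ⟨σ, hσ, hrσ⟩ := hr.exists_derangement_two_mul_sum_eq hmax.localize
  exact ⟨r, σ, hr0, hr, hσ, hrσ, fun r' _ hr' => hmax hr',
    fun σ' hσ' => hrσ ▸ hr.two_mul_sum_le hσ'⟩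
end

section
/- Let X be a metric space, n ≥ 2, and p : Fin n → X a family of points. Let r : Fin n → ℝ be a feasible system of radii, and suppose there exists a derangement σ of Fin n such that r i + r (σ i) = dist (p i) (p (σ i)) for every i (i.e., each ball touches the next ball along a cycle cover; this holds in particular when every connected component of the touching graph of the balls is an odd cycle or an isolated edge). Then for every feasible system of radii r' : Fin n → ℝ we have ∑_i r' i ≤ ∑_i r i; that is, r has the maximum sum of radii among all feasible systems with the same centers. -/
/-- Optimality condition: if a feasible system of radii touches along a cycle
cover (each ball touches the next ball along a derangement), then it maximizes
the sum of radii among all feasible systems with the same centers. -/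
theorem touching_along_cycle_cover_implies_optimal
    {X : Type*} [MetricSpace X] (n : ℕ) (hn : 2 ≤ n) (p : Fin n → X)
    (r : Fin n → ℝ)
    (hr0 : ∀ i, 0 ≤ r i)
    (hr : ∀ i j, i ≠ j → r i + r j ≤ dist (p i) (p j))
    (σ : Equiv.Perm (Fin n)) (hσ : ∀ i, σ i ≠ i)
    (htouch : ∀ i, r i + r (σ i) = dist (p i) (p (σ i))) :
    ∀ r' : Fin n → ℝ, (∀ i, 0 ≤ r' i) →
      (∀ i j, i ≠ j → r' i + r' j ≤ dist (p i) (p j)) →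
      ∑ i, r' i ≤ ∑ i, r i := by
  intro r' hr'0 hr'
  have key : ∑ i, (r' i + r' (σ i)) ≤ ∑ i, (r i + r (σ i)) := by
    apply Finset.sum_le_sum
    intro i _
    rw [htouch i]
    exact hr' i (σ i) (Ne.symm (hσ i))
  have h1 : ∑ i, r' (σ i) = ∑ i, r' i := Equiv.sum_comp σ r'
  have h2 : ∑ i, r (σ i) = ∑ i, r i := Equiv.sum_comp σ r
  simp only [Finset.sum_add_distrib, h1, h2] at key
  linarith
end

section
/- Let V be a finite type, G : SimpleGraph V, and c : V → V → ℝ a symmetric weight function. (a) For every permutation σ of V such that G.Adj v (σ v) for all v (equivalently, a perfect matching of the bipartite double cover of G, matching the first copy of v to the second copy of σ v), the function m : V → V → ℕ defined by m v w = (if σ v = w then 1 else 0) + (if σ w = v then 1 else 0) is a cycle cover of G, and its weight (1/2) · ∑_v ∑_w (m v w) · c v w equals ∑_v c v (σ v). (b) Conversely, for every cycle cover m of G there exists a permutation σ of V with G.Adj v (σ v) for all v such that m v w = (if σ v = w then 1 else 0) + (if σ w = v then 1 else 0) for all v, w; in particular its weight equals ∑_v c v (σ v). -/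
open Finset

set_option linter.unusedSectionVars false

section CycleCoverAux

variable {V : Type*} [Fintype V] [DecidableEq V]

private lemma sum_eq_one_nat {α : Type*} [DecidableEq α] {s : Finset α} {f : α → ℕ}
    (h : ∑ x ∈ s, f x = 1) :
    ∃ x ∈ s, f x = 1 ∧ ∀ y ∈ s, y ≠ x → f y = 0 := by
  have hx : ∃ x ∈ s, 0 < f x := by
    by_contra hc
    push_neg at hc
    have h0 : ∑ x ∈ s, f x = 0 := Finset.sum_eq_zero fun x hxs => Nat.le_zero.mp (hc x hxs)
    omega
  obtain ⟨x, hxs, hfx⟩ := hx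
  have hadd : f x + ∑ y ∈ s.erase x, f y = ∑ y ∈ s, f y := Finset.add_sum_erase s f hxs
  have hrest : ∑ y ∈ s.erase x, f y = 0 := by omega
  refine ⟨x, hxs, by omega, fun y hys hyx => ?_⟩
  exact (Finset.sum_eq_zero_iff).mp hrest y (Finset.mem_erase.mpr ⟨hyx, hys⟩)

noncomputable def mother (m : V → V → ℕ) (v p : V) : V :=
  if h : ∃ x, x ≠ p ∧ m v x = 1 ∧ ∀ y, 0 < m v y → y = p ∨ y = x then h.choose else v

lemma mother_spec {m : V → V → ℕ} (hdeg : ∀ v, ∑ w, m v w = 2)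
    {v p : V} (h : m v p = 1) :
    mother m v p ≠ p ∧ m v (mother m v p) = 1 ∧
      ∀ y, 0 < m v y → y = p ∨ y = mother m v p := by
  have hsum : ∑ y ∈ (univ.erase p), m v y = 1 := by
    have h1 := Finset.add_sum_erase univ (m v) (mem_univ p)
    have h2 := hdeg v
    omega
  obtain ⟨x, hxmem, hx1, hx0⟩ := sum_eq_one_nat hsum
  have hxp : x ≠ p := (Finset.mem_erase.mp hxmem).1
  have hex : ∃ x, x ≠ p ∧ m v x = 1 ∧ ∀ y, 0 < m v y → y = p ∨ y = x :=
    ⟨x, hxp, hx1, fun y hy => by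
      by_cases hyp : y = p
      · exact Or.inl hyp
      · right
        by_contra hyx
        have := hx0 y (Finset.mem_erase.mpr ⟨hyp, mem_univ y⟩) hyx
        omega⟩
  rw [mother, dif_pos hex]
  exact hex.choose_spec

noncomputable def mwalk (m : V → V → ℕ) (v0 a : V) : ℕ → V
  | 0 => v0
  | 1 => a
  | (n+2) => mother m (mwalk m v0 a (n+1)) (mwalk m v0 a n)

variable {m : V → V → ℕ} (hsym : ∀ v w, m v w = m w v) (hdiag : ∀ v, m v v = 0)
  (hdeg : ∀ v, ∑ w, m v w = 2) {v0 a : V} (h1 : m v0 a = 1)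

include hsym hdiag hdeg h1

lemma mwalk_adj : ∀ n, m (mwalk m v0 a n) (mwalk m v0 a (n+1)) = 1 := by
  intro n
  induction n using Nat.strong_induction_on with
  | _ n ih =>
    match n with
    | 0 => exact h1
    | (k+1) =>
      have hk : m (mwalk m v0 a k) (mwalk m v0 a (k+1)) = 1 := ih k (by omega)
      have hk' : m (mwalk m v0 a (k+1)) (mwalk m v0 a k) = 1 := by rw [hsym]; exact hk
      exact (mother_spec hdeg hk').2.1

lemma mwalk_succ_ne : ∀ n, mwalk m v0 a (n+1) ≠ mwalk m v0 a n := by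
  intro n h
  have := mwalk_adj hsym hdiag hdeg h1 n
  rw [h, hdiag] at this
  omega

lemma mwalk_two_ne : ∀ n, mwalk m v0 a (n+2) ≠ mwalk m v0 a n := by
  intro n
  have hk' : m (mwalk m v0 a (n+1)) (mwalk m v0 a n) = 1 := by
    rw [hsym]; exact mwalk_adj hsym hdiag hdeg h1 n
  exact (mother_spec hdeg hk').1

lemma mwalk_cover : ∀ n y, 0 < m (mwalk m v0 a (n+1)) y →
    y = mwalk m v0 a n ∨ y = mwalk m v0 a (n+2) := by
  intro n y hy
  have hk' : m (mwalk m v0 a (n+1)) (mwalk m v0 a n) = 1 := by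
    rw [hsym]; exact mwalk_adj hsym hdiag hdeg h1 n
  exact (mother_spec hdeg hk').2.2 y hy

lemma mwalk_back : ∀ n, mwalk m v0 a n =
    mother m (mwalk m v0 a (n+1)) (mwalk m v0 a (n+2)) := by
  intro n
  have hn1 : m (mwalk m v0 a (n+1)) (mwalk m v0 a (n+2)) = 1 :=
    mwalk_adj hsym hdiag hdeg h1 (n+1)
  have hspec := mother_spec hdeg hn1
  have hcov := mwalk_cover hsym hdiag hdeg h1 n
    (mother m (mwalk m v0 a (n+1)) (mwalk m v0 a (n+2))) (by rw [hspec.2.1]; exact Nat.one_pos)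
  rcases hcov with h | h
  · exact h.symm
  · exact absurd h hspec.1

lemma mwalk_pair_back {n k : ℕ} (h2 : mwalk m v0 a (n+1) = mwalk m v0 a (k+1))
    (h3 : mwalk m v0 a (n+2) = mwalk m v0 a (k+2)) :
    mwalk m v0 a n = mwalk m v0 a k :=
  calc mwalk m v0 a n = mother m (mwalk m v0 a (n+1)) (mwalk m v0 a (n+2)) :=
        mwalk_back hsym hdiag hdeg h1 n
    _ = mother m (mwalk m v0 a (k+1)) (mwalk m v0 a (k+2)) := by rw [h2, h3]
    _ = mwalk m v0 a k := (mwalk_back hsym hdiag hdeg h1 k).symm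

lemma mwalk_descend : ∀ x d, mwalk m v0 a x = mwalk m v0 a (x + d) →
    mwalk m v0 a (x+1) = mwalk m v0 a (x + d + 1) →
    mwalk m v0 a 0 = mwalk m v0 a d ∧ mwalk m v0 a 1 = mwalk m v0 a (d + 1) := by
  intro x
  induction x with
  | zero => intro d h h'; exact ⟨by simpa using h, by simpa using h'⟩
  | succ x ih =>
    intro d h h'
    have h2 : mwalk m v0 a (x+1) = mwalk m v0 a ((x+d)+1) := by
      rw [show (x+d)+1 = x+1+d from by omega]; exact h
    have h3 : mwalk m v0 a (x+2) = mwalk m v0 a ((x+d)+2) := by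
      rw [show (x+d)+2 = x+1+d+1 from by omega, show x+2 = x+1+1 from by omega]; exact h'
    exact ih d (mwalk_pair_back hsym hdiag hdeg h1 h2 h3) h2

lemma mwalk_period_exists : ∃ t, 0 < t ∧ mwalk m v0 a t = mwalk m v0 a 0 ∧
    mwalk m v0 a (t+1) = mwalk m v0 a 1 := by
  obtain ⟨x, y, hxy, hpq⟩ := Finite.exists_ne_map_eq_of_infinite
    (fun n => (mwalk m v0 a n, mwalk m v0 a (n+1)))
  simp only [Prod.mk.injEq] at hpq
  have key : ∀ x y : ℕ, x < y → mwalk m v0 a x = mwalk m v0 a y →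
      mwalk m v0 a (x+1) = mwalk m v0 a (y+1) →
      ∃ t, 0 < t ∧ mwalk m v0 a t = mwalk m v0 a 0 ∧
        mwalk m v0 a (t+1) = mwalk m v0 a 1 := by
    intro x y hlt h h'
    obtain ⟨hA, hB⟩ := mwalk_descend hsym hdiag hdeg h1 x (y - x)
      (by rw [show x + (y-x) = y from by omega]; exact h)
      (by rw [show x + (y-x) + 1 = y + 1 from by omega]; exact h')
    exact ⟨y - x, by omega, hA.symm, hB.symm⟩
  rcases Ne.lt_or_gt hxy with hlt | hlt
  · exact key x y hlt hpq.1 hpq.2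
  · exact key y x hlt hpq.1.symm hpq.2.symm

omit hsym hdiag hdeg h1 in
lemma mwalk_periodic {t : ℕ} (ht0 : mwalk m v0 a t = mwalk m v0 a 0)
    (ht1 : mwalk m v0 a (t+1) = mwalk m v0 a 1) :
    ∀ n, mwalk m v0 a (n + t) = mwalk m v0 a n := by
  have key : ∀ n, mwalk m v0 a (n + t) = mwalk m v0 a n ∧
      mwalk m v0 a (n + 1 + t) = mwalk m v0 a (n + 1) := by
    intro n
    induction n with
    | zero => exact ⟨by simpa using ht0, by simpa [Nat.add_comm] using ht1⟩
    | succ n ih =>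
      refine ⟨ih.2, ?_⟩
      rw [show n+1+1+t = (n+t)+2 from by omega, show n+1+1 = n+2 from by omega]
      rw [mwalk, mwalk, show (n+t)+1 = n+1+t from by omega, ih.1, ih.2]
  exact fun n => (key n).1


lemma mwalk_reverse {I J : ℕ} (hJ : mwalk m v0 a J = mwalk m v0 a I)
    (hJ1 : mwalk m v0 a (J+1) = mwalk m v0 a (I-1)) (hI : 1 ≤ I) :
    ∀ k, k + 1 ≤ I → mwalk m v0 a (J+k) = mwalk m v0 a (I-k) ∧
      mwalk m v0 a (J+k+1) = mwalk m v0 a (I-k-1) := by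
  intro k
  induction k with
  | zero =>
    intro _
    refine ⟨by simpa using hJ, by simpa using hJ1⟩
  | succ k ih =>
    intro hk1
    obtain ⟨ih1, ih2⟩ := ih (by omega)
    constructor
    · rw [show J+(k+1) = J+k+1 from rfl, show I-(k+1) = I-k-1 from by omega]
      exact ih2
    · rw [show J+(k+1)+1 = (J+k)+2 from by omega, show I-(k+1)-1 = I-k-2 from by omega]
      rw [mwalk, ih1, ih2]
      rw [show I-k-1 = (I-k-2)+1 from by omega, show I-k = (I-k-2)+2 from by omega]
      exact (mwalk_back hsym hdiag hdeg h1 (I-k-2)).symm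

lemma mwalk_no_rep {t : ℕ} (ht : 0 < t)
    (ht0 : mwalk m v0 a t = mwalk m v0 a 0) (ht1 : mwalk m v0 a (t+1) = mwalk m v0 a 1)
    (hmin : ∀ t', 0 < t' → t' < t →
      ¬(mwalk m v0 a t' = mwalk m v0 a 0 ∧ mwalk m v0 a (t'+1) = mwalk m v0 a 1)) :
    ∀ i j, i < j → j < t → mwalk m v0 a i ≠ mwalk m v0 a j := by
  intro i j hij hjt heq
  have hper := mwalk_periodic (m := m) (v0 := v0) (a := a) ht0 ht1
  have hmul : ∀ k n, mwalk m v0 a (n + k * t) = mwalk m v0 a n := by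
    intro k
    induction k with
    | zero => simp
    | succ k ih =>
      intro n
      rw [show n + (k+1)*t = (n + k*t) + t from by ring, hper, ih]
  have hI1 : mwalk m v0 a (i + t) = mwalk m v0 a i := hper i
  have hJ1 : mwalk m v0 a (j + t) = mwalk m v0 a j := hper j
  have hIJ : mwalk m v0 a (i + t) = mwalk m v0 a (j + t) := by rw [hI1, hJ1, heq]
  -- coverage of neighbors of u (i+t)
  have hadjJ : 0 < m (mwalk m v0 a (i+t)) (mwalk m v0 a (j+t+1)) := by
    rw [hIJ]
    have := mwalk_adj hsym hdiag hdeg h1 (j+t)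
    omega
  have hcov := mwalk_cover hsym hdiag hdeg h1 (i+t-1) (mwalk m v0 a (j+t+1))
    (by rw [show i+t-1+1 = i+t from by omega]; exact hadjJ)
  rw [show i+t-1+2 = i+t+1 from by omega] at hcov
  rcases hcov with hB | hA
  · -- reversal case
    set u := mwalk m v0 a with hu
    have hJ'I' : u (j + t) = u (i + 2*t) := by
      rw [hJ1, show i + 2*t = i + 2*t from rfl, hmul 2 i, heq]
    have hJ'I'1 : u (j + t + 1) = u (i + 2*t - 1) := by
      rw [hB, show i + 2*t - 1 = (i+t-1) + t from by omega, hper]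
    have hrev := mwalk_reverse hsym hdiag hdeg h1 hJ'I' hJ'I'1 (by omega)
    set D := i + 2*t - (j + t) with hD
    have hD1 : 1 ≤ D := by omega
    have hDI : j + t + D = i + 2*t := by omega
    rcases Nat.even_or_odd D with ⟨k, hk⟩ | ⟨k, hk⟩
    · -- D = 2k, k ≥ 1 : u (X+1) = u (X-1)
      have hk1 : 1 ≤ k := by omega
      have := (hrev k (by omega)).2
      rw [show i+2*t-k-1 = j+t+k-1 from by omega] at this
      have h2 := mwalk_two_ne hsym hdiag hdeg h1 (j+t+k-1)
      rw [show (j+t+k-1)+2 = j+t+k+1 from by omega] at h2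
      exact h2 this
    · -- D = 2k+1 : u X = u (X+1)
      have := (hrev k (by omega)).1
      rw [show i+2*t-k = j+t+k+1 from by omega] at this
      exact mwalk_succ_ne hsym hdiag hdeg h1 (j+t+k) this.symm
  · -- descend case: period j - i < t
    have hdesc := mwalk_descend hsym hdiag hdeg h1 (i+t) (j-i)
      (by rw [show i+t+(j-i) = j+t from by omega]; exact hIJ)
      (by rw [show i+t+(j-i)+1 = j+t+1 from by omega]; exact hA.symm)
    exact hmin (j-i) (by omega) (by omega) ⟨hdesc.1.symm, hdesc.2.symm⟩


omit hsym hdiag hdeg h1 in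
lemma mwalk_mod {t : ℕ} (ht : 0 < t)
    (ht0 : mwalk m v0 a t = mwalk m v0 a 0) (ht1 : mwalk m v0 a (t+1) = mwalk m v0 a 1) :
    ∀ n, mwalk m v0 a n = mwalk m v0 a (n % t) := by
  have hper := mwalk_periodic (m := m) (v0 := v0) (a := a) ht0 ht1
  have hmul : ∀ k n, mwalk m v0 a (n + k * t) = mwalk m v0 a n := by
    intro k
    induction k with
    | zero => simp
    | succ k ih =>
      intro n
      rw [show n + (k+1)*t = (n + k*t) + t from by ring, hper, ih]
  intro n
  have e := Nat.mod_add_div' n t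
  calc mwalk m v0 a n = mwalk m v0 a (n % t + n / t * t) := by rw [e]
    _ = mwalk m v0 a (n % t) := hmul (n/t) (n%t)

noncomputable def mnext (m : V → V → ℕ) (v0 a : V) (t : ℕ) : V → V :=
  fun v => if h : ∃ k, k < t ∧ mwalk m v0 a k = v then mwalk m v0 a (h.choose + 1) else v

lemma mnext_fix {t : ℕ} {v : V} (hv : ¬∃ k, k < t ∧ mwalk m v0 a k = v) :
    mnext m v0 a t v = v := by
  rw [mnext, dif_neg hv]

lemma mnext_good {t : ℕ} (ht : 0 < t)
    (ht0 : mwalk m v0 a t = mwalk m v0 a 0) (ht1 : mwalk m v0 a (t+1) = mwalk m v0 a 1)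
    (hmin : ∀ t', 0 < t' → t' < t →
      ¬(mwalk m v0 a t' = mwalk m v0 a 0 ∧ mwalk m v0 a (t'+1) = mwalk m v0 a 1)) :
    Function.Injective (mnext m v0 a t) ∧
      (∀ n, mnext m v0 a t (mwalk m v0 a n) = mwalk m v0 a (n+1)) := by
  have hper := mwalk_periodic (m := m) (v0 := v0) (a := a) ht0 ht1
  have hmul : ∀ k n, mwalk m v0 a (n + k * t) = mwalk m v0 a n := by
    intro k
    induction k with
    | zero => simp
    | succ k ih =>
      intro n
      rw [show n + (k+1)*t = (n + k*t) + t from by ring, hper, ih]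
  have hmod : ∀ n, mwalk m v0 a n = mwalk m v0 a (n % t) := by
    intro n
    have e := Nat.mod_add_div' n t
    calc mwalk m v0 a n = mwalk m v0 a (n % t + n / t * t) := by rw [e]
      _ = mwalk m v0 a (n % t) := hmul (n/t) (n%t)
  have hinj : ∀ i j, i < t → j < t → mwalk m v0 a i = mwalk m v0 a j → i = j := by
    intro i j hi hj hij
    rcases Nat.lt_trichotomy i j with h | h | h
    · exact absurd hij (mwalk_no_rep hsym hdiag hdeg h1 ht ht0 ht1 hmin i j h hj)
    · exact h
    · exact absurd hij.symm (mwalk_no_rep hsym hdiag hdeg h1 ht ht0 ht1 hmin j i h hi)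
  have happly : ∀ n, mnext m v0 a t (mwalk m v0 a n) = mwalk m v0 a (n+1) := by
    intro n
    have hex : ∃ k, k < t ∧ mwalk m v0 a k = mwalk m v0 a n :=
      ⟨n % t, Nat.mod_lt n ht, (hmod n).symm⟩
    rw [mnext, dif_pos hex]
    obtain ⟨hclt, hceq⟩ := hex.choose_spec
    have hcn : hex.choose = n % t := by
      apply hinj _ _ hclt (Nat.mod_lt n ht)
      rw [hceq, hmod]
    rw [hcn]
    have e := Nat.mod_add_div' n t
    calc mwalk m v0 a (n % t + 1) = mwalk m v0 a (n % t + 1 + (n / t) * t) :=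
          (hmul (n/t) (n % t + 1)).symm
      _ = mwalk m v0 a (n + 1) := by rw [show n % t + 1 + n / t * t = n + 1 from by omega]
  refine ⟨?_, happly⟩
  intro x y hxy
  by_cases hx : ∃ k, k < t ∧ mwalk m v0 a k = x
  · obtain ⟨i, hi, hix⟩ := hx
    by_cases hy : ∃ k, k < t ∧ mwalk m v0 a k = y
    · obtain ⟨j, hj, hjy⟩ := hy
      rw [← hix, ← hjy, happly, happly] at hxy
      have : (i+1) % t = (j+1) % t := by
        apply hinj _ _ (Nat.mod_lt _ ht) (Nat.mod_lt _ ht)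
        rw [← hmod, ← hmod]; exact hxy
      have h2 : i % t = j % t := Nat.ModEq.add_right_cancel' 1 this
      rw [Nat.mod_eq_of_lt hi, Nat.mod_eq_of_lt hj] at h2
      rw [← hix, ← hjy, h2]
    · exfalso
      rw [← hix, happly, mnext_fix hsym hdiag hdeg h1 hy] at hxy
      exact hy ⟨(i+1) % t, Nat.mod_lt _ ht, by rw [← hmod]; exact hxy⟩
  · by_cases hy : ∃ k, k < t ∧ mwalk m v0 a k = y
    · exfalso
      obtain ⟨j, hj, hjy⟩ := hy
      rw [mnext_fix hsym hdiag hdeg h1 hx, ← hjy, happly] at hxy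
      exact hx ⟨(j+1) % t, Nat.mod_lt _ ht, by rw [← hmod, ← hxy]⟩
    · rwa [mnext_fix hsym hdiag hdeg h1 hx, mnext_fix hsym hdiag hdeg h1 hy] at hxy

end CycleCoverAux

lemma orient {V : Type*} [Fintype V] [DecidableEq V]
    (m : V → V → ℕ) (hsym : ∀ v w, m v w = m w v) (hdiag : ∀ v, m v v = 0)
    (hdeg : ∀ v, ∑ w, m v w = 2) :
    ∀ s : Finset V, (∀ v ∈ s, ∀ w, 0 < m v w → w ∈ s) →
    ∃ σ : Equiv.Perm V, (∀ v, v ∉ s → σ v = v) ∧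
      ∀ v ∈ s, 0 < m v (σ v) ∧ (σ (σ v) = v → m v (σ v) = 2) := by
  intro s
  induction s using Finset.strongInduction with
  | _ s ih =>
    intro hclosed
    rcases s.eq_empty_or_nonempty with rfl | ⟨v0, hv0⟩
    · exact ⟨1, fun v _ => rfl, fun v hv => absurd hv (notMem_empty v)⟩
    have hex : ∃ a, 0 < m v0 a := by
      by_contra hc; push_neg at hc
      have h0 : ∑ w, m v0 w = 0 := Finset.sum_eq_zero fun w _ => by have := hc w; omega
      have := hdeg v0; omega
    obtain ⟨a, ha⟩ := hex
    have hle2 : m v0 a ≤ 2 := by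
      have h1 := Finset.single_le_sum (f := m v0) (fun i _ => Nat.zero_le _) (mem_univ a)
      have h2 := hdeg v0; omega
    have has : a ∈ s := hclosed v0 hv0 a ha
    by_cases h2 : m v0 a = 2
    · -- doubled edge: a 2-cycle through v0 and a
      have hav0 : m a v0 = 2 := by rw [hsym]; exact h2
      have hne : a ≠ v0 := fun h => by rw [h, hdiag] at h2; omega
      have honly : ∀ u w, m u w = 2 → ∀ y, 0 < m u y → y = w := by
        intro u w huw y hy
        by_contra hyw
        have hsum := Finset.add_sum_erase univ (m u) (mem_univ w)
        have hy' : y ∈ univ.erase w := mem_erase.mpr ⟨hyw, mem_univ y⟩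
        have hle := Finset.single_le_sum (f := m u) (fun i _ => Nat.zero_le _) hy'
        have := hdeg u
        omega
      set s' := s \ {v0, a} with hs'
      have hsub : s' ⊂ s := Finset.ssubset_iff_of_subset sdiff_subset |>.mpr
        ⟨v0, hv0, by simp [hs']⟩
      have hclosed' : ∀ v ∈ s', ∀ w, 0 < m v w → w ∈ s' := by
        intro v hv w hw
        have hvs : v ∈ s := (mem_sdiff.mp hv).1
        have hvna : v ≠ v0 ∧ v ≠ a := by
          have := (mem_sdiff.mp hv).2
          simp at this
          exact this
        have hws : w ∈ s := hclosed v hvs w hw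
        have hwv0 : w ≠ v0 := by
          intro h
          rw [h] at hw
          have hpos : 0 < m v0 v := by rw [hsym] at hw; omega
          exact hvna.2 (honly v0 a h2 v hpos)
        have hwa : w ≠ a := by
          intro h
          rw [h] at hw
          have hpos : 0 < m a v := by rw [hsym] at hw; omega
          exact hvna.1 (honly a v0 hav0 v hpos)
        rw [mem_sdiff]
        exact ⟨hws, by simp [hwv0, hwa]⟩
      obtain ⟨σ', hfix', hgood'⟩ := ih s' hsub hclosed'
      have hv0ns' : v0 ∉ s' := by simp [hs']
      have hans' : a ∉ s' := by simp [hs']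
      refine ⟨Equiv.swap v0 a * σ', ?_, ?_⟩
      · intro v hv
        have hvns' : v ∉ s' := fun h => hv (mem_sdiff.mp h).1
        have : (Equiv.swap v0 a * σ') v = Equiv.swap v0 a v := by
          rw [Equiv.Perm.mul_apply, hfix' v hvns']
        rw [this, Equiv.swap_apply_of_ne_of_ne (fun h => hv (by rw [h]; exact hv0))
          (fun h => hv (by rw [h]; exact has))]
      · intro v hv
        have ev0 : (Equiv.swap v0 a * σ') v0 = a := by
          rw [Equiv.Perm.mul_apply, hfix' v0 hv0ns', Equiv.swap_apply_left]
        have ea : (Equiv.swap v0 a * σ') a = v0 := by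
          rw [Equiv.Perm.mul_apply, hfix' a hans', Equiv.swap_apply_right]
        by_cases hvC : v = v0 ∨ v = a
        · rcases hvC with h | h
          · rw [h, ev0]
            exact ⟨by omega, fun _ => h2⟩
          · rw [h, ea]
            exact ⟨by omega, fun _ => hav0⟩
        · push_neg at hvC
          have hvs' : v ∈ s' := mem_sdiff.mpr ⟨hv, by simp [hvC.1, hvC.2]⟩
          obtain ⟨hpos', hcond'⟩ := hgood' v hvs'
          have hσv : σ' v ∈ s' := hclosed' v hvs' (σ' v) hpos'
          have hσvne : σ' v ≠ v0 ∧ σ' v ≠ a := by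
            have := (mem_sdiff.mp hσv).2
            simp at this
            exact this
          have e1 : (Equiv.swap v0 a * σ') v = σ' v := by
            rw [Equiv.Perm.mul_apply, Equiv.swap_apply_of_ne_of_ne hσvne.1 hσvne.2]
          have hσσv : σ' (σ' v) ∈ s' := hclosed' (σ' v) hσv (σ' (σ' v)) (hgood' (σ' v) hσv).1
          have hσσvne : σ' (σ' v) ≠ v0 ∧ σ' (σ' v) ≠ a := by
            have := (mem_sdiff.mp hσσv).2
            simp at this
            exact this
          have e2 : (Equiv.swap v0 a * σ') (σ' v) = σ' (σ' v) := by
            rw [Equiv.Perm.mul_apply, Equiv.swap_apply_of_ne_of_ne hσσvne.1 hσσvne.2]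
          rw [e1, e2]
          exact ⟨hpos', hcond'⟩
    · -- single edge out of v0 : trace the cycle
      classical
      have h1 : m v0 a = 1 := by omega
      have hP := mwalk_period_exists hsym hdiag hdeg h1
      set t := Nat.find hP with htdef
      obtain ⟨ht, ht0, ht1⟩ := Nat.find_spec hP
      have hmin : ∀ t', 0 < t' → t' < t →
          ¬(mwalk m v0 a t' = mwalk m v0 a 0 ∧ mwalk m v0 a (t'+1) = mwalk m v0 a 1) := by
        intro t' h0 hlt hcon
        exact Nat.find_min hP hlt ⟨h0, hcon.1, hcon.2⟩
      obtain ⟨hinjF, happly⟩ := mnext_good hsym hdiag hdeg h1 ht ht0 ht1 hmin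
      have hper := mwalk_periodic (m := m) (v0 := v0) (a := a) ht0 ht1
      have hmod := mwalk_mod (m := m) (v0 := v0) (a := a) ht ht0 ht1
      have hw0 : mwalk m v0 a 0 = v0 := by rw [mwalk]
      have hus : ∀ n, mwalk m v0 a n ∈ s := by
        intro n
        induction n with
        | zero => rw [hw0]; exact hv0
        | succ n ihn =>
          have := mwalk_adj hsym hdiag hdeg h1 n
          exact hclosed _ ihn _ (by omega)
      have hCper : ∀ n, ∃ k, k < t ∧ mwalk m v0 a k = mwalk m v0 a n :=
        fun n => ⟨n % t, Nat.mod_lt n ht, (hmod n).symm⟩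
      set s' := s.filter (fun v => ¬∃ k, k < t ∧ mwalk m v0 a k = v) with hs'
      have hsub : s' ⊂ s := by
        refine Finset.ssubset_iff_of_subset (filter_subset _ _) |>.mpr ⟨v0, hv0, ?_⟩
        rw [mem_filter]
        rintro ⟨-, hn⟩
        exact hn ⟨0, ht, hw0⟩
      have hCclosed : ∀ (k : ℕ) (y : V), 0 < m (mwalk m v0 a k) y →
          ∃ k', k' < t ∧ mwalk m v0 a k' = y := by
        intro k y hy
        have hy' : 0 < m (mwalk m v0 a (k+t-1+1)) y := by
          rw [show k+t-1+1 = k+t from by omega, hper k]; exact hy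
        rcases mwalk_cover hsym hdiag hdeg h1 (k+t-1) y hy' with h | h
        · exact ⟨(k+t-1) % t, Nat.mod_lt _ ht, by rw [← hmod]; exact h.symm⟩
        · rw [show k+t-1+2 = k+t+1 from by omega] at h
          exact ⟨(k+t+1) % t, Nat.mod_lt _ ht, by rw [← hmod]; exact h.symm⟩
      have hclosed' : ∀ v ∈ s', ∀ w, 0 < m v w → w ∈ s' := by
        intro v hv w hw
        rw [mem_filter] at hv ⊢
        obtain ⟨hvs, hvnc⟩ := hv
        refine ⟨hclosed v hvs w hw, ?_⟩
        rintro ⟨k, hk, hkw⟩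
        apply hvnc
        rw [← hkw] at hw
        rw [hsym] at hw
        exact hCclosed k v hw
      obtain ⟨σ', hfix', hgood'⟩ := ih s' hsub hclosed'
      have hFbij : Function.Bijective (mnext m v0 a t) :=
        Finite.injective_iff_bijective.mp hinjF
      set σC : Equiv.Perm V := Equiv.ofBijective _ hFbij with hσC
      have hσCapp : ∀ v, σC v = mnext m v0 a t v := fun v => rfl
      refine ⟨σC * σ', ?_, ?_⟩
      · intro v hv
        have hvns' : v ∉ s' := fun h => hv (Finset.mem_of_mem_filter v h)
        have hvnC : ¬∃ k, k < t ∧ mwalk m v0 a k = v := by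
          rintro ⟨k, hk, hkv⟩
          exact hv (hkv ▸ hus k)
        rw [Equiv.Perm.mul_apply, hfix' v hvns', hσCapp]
        exact mnext_fix hsym hdiag hdeg h1 hvnC
      · intro v hv
        by_cases hvC : ∃ k, k < t ∧ mwalk m v0 a k = v
        · obtain ⟨k, hk, hkv⟩ := hvC
          have hvns' : v ∉ s' := by
            rw [mem_filter]
            rintro ⟨-, hn⟩
            exact hn ⟨k, hk, hkv⟩
          have e1 : (σC * σ') v = mwalk m v0 a (k+1) := by
            rw [Equiv.Perm.mul_apply, hfix' v hvns', hσCapp, ← hkv, happly]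
          have hnext_ns' : mwalk m v0 a (k+1) ∉ s' := by
            rw [mem_filter]
            rintro ⟨-, hn⟩
            exact hn (hCper (k+1))
          have e2 : (σC * σ') (mwalk m v0 a (k+1)) = mwalk m v0 a (k+2) := by
            rw [Equiv.Perm.mul_apply, hfix' _ hnext_ns', hσCapp, happly]
          rw [e1, e2]
          constructor
          · rw [← hkv]
            have := mwalk_adj hsym hdiag hdeg h1 k
            omega
          · intro hcon
            exfalso
            rw [← hkv] at hcon
            exact mwalk_two_ne hsym hdiag hdeg h1 k hcon
        · have hvs' : v ∈ s' := by rw [mem_filter]; exact ⟨hv, hvC⟩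
          obtain ⟨hpos', hcond'⟩ := hgood' v hvs'
          have hσv : σ' v ∈ s' := hclosed' v hvs' (σ' v) hpos'
          have hσvnC : ¬∃ k, k < t ∧ mwalk m v0 a k = σ' v :=
            (mem_filter.mp hσv).2
          have e1 : (σC * σ') v = σ' v := by
            rw [Equiv.Perm.mul_apply, hσCapp]
            exact mnext_fix hsym hdiag hdeg h1 hσvnC
          have hσσv : σ' (σ' v) ∈ s' := hclosed' (σ' v) hσv (σ' (σ' v)) (hgood' (σ' v) hσv).1
          have hσσvnC : ¬∃ k, k < t ∧ mwalk m v0 a k = σ' (σ' v) :=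
            (mem_filter.mp hσσv).2
          have e2 : (σC * σ') (σ' v) = σ' (σ' v) := by
            rw [Equiv.Perm.mul_apply, hσCapp]
            exact mnext_fix hsym hdiag hdeg h1 hσσvnC
          rw [e1, e2]
          exact ⟨hpos', hcond'⟩

lemma deg_formula {V : Type*} [Fintype V] [DecidableEq V] (σ : Equiv.Perm V) (v : V) :
    ∑ w, ((if σ v = w then 1 else 0) + (if σ w = v then 1 else 0) : ℕ) = 2 := by
  rw [Finset.sum_add_distrib]
  have A : ∑ w, (if σ v = w then (1:ℕ) else 0) = 1 := by
    rw [Finset.sum_ite_eq]; simp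
  have B : ∑ w, (if σ w = v then (1:ℕ) else 0) = 1 := by
    rw [Equiv.sum_comp σ (fun w => if w = v then (1:ℕ) else 0)]
    rw [Finset.sum_ite_eq']; simp
  rw [A, B]

lemma weight_formula {V : Type*} [Fintype V] [DecidableEq V]
    (c : V → V → ℝ) (hc : ∀ v w, c v w = c w v) (σ : Equiv.Perm V) :
    (1 / 2 : ℝ) * ∑ v, ∑ w,
        (((if σ v = w then 1 else 0) + (if σ w = v then 1 else 0) : ℕ) : ℝ) * c v w
      = ∑ v, c v (σ v) := by
  have hsplit : ∀ v w : V,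
      (((if σ v = w then 1 else 0) + (if σ w = v then 1 else 0) : ℕ) : ℝ) * c v w
        = (if σ v = w then c v w else 0) + (if σ w = v then c v w else 0) := by
    intro v w
    by_cases h1 : σ v = w <;> by_cases h2 : σ w = v <;>
      simp [h1, h2] <;> push_cast <;> ring
  simp only [hsplit]
  simp only [Finset.sum_add_distrib]
  have A : ∑ v, ∑ w, (if σ v = w then c v w else 0) = ∑ v, c v (σ v) := by
    refine Finset.sum_congr rfl fun v _ => ?_
    rw [Finset.sum_ite_eq]; simp
  have B : ∑ v, ∑ w, (if σ w = v then c v w else 0) = ∑ v, c v (σ v) := by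
    rw [Finset.sum_comm]
    refine Finset.sum_congr rfl fun w _ => ?_
    rw [Finset.sum_ite_eq]
    simp only [mem_univ, if_true]
    exact hc (σ w) w
  rw [A, B]
  ring

/-- Correspondence between cycle covers of a graph `G` and perfect matchings of
its bipartite double cover (encoded as permutations `σ` with `G.Adj v (σ v)`):
(a) every such permutation yields a cycle cover of equal weight, and
(b) every cycle cover arises this way. -/
theorem cycle_cover_iff_double_cover_matching
    {V : Type*} [Fintype V] [DecidableEq V]
    (G : SimpleGraph V) (c : V → V → ℝ) (hc : ∀ v w, c v w = c w v) :
    (∀ σ : Equiv.Perm V, (∀ v, G.Adj v (σ v)) →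
      (∀ v w, ((if σ v = w then 1 else 0) + (if σ w = v then 1 else 0) : ℕ)
        = (if σ w = v then 1 else 0) + (if σ v = w then 1 else 0)) ∧
      (∀ v, ((if σ v = v then 1 else 0) + (if σ v = v then 1 else 0) : ℕ) = 0) ∧
      (∀ v w, 0 < ((if σ v = w then 1 else 0) + (if σ w = v then 1 else 0) : ℕ)
        → G.Adj v w) ∧
      (∀ v, ∑ w, ((if σ v = w then 1 else 0) + (if σ w = v then 1 else 0) : ℕ) = 2) ∧
      (1 / 2 : ℝ) * ∑ v, ∑ w,
          (((if σ v = w then 1 else 0) + (if σ w = v then 1 else 0) : ℕ) : ℝ) * c v w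
        = ∑ v, c v (σ v)) ∧
    (∀ m : V → V → ℕ,
      (∀ v w, m v w = m w v) →
      (∀ v, m v v = 0) →
      (∀ v w, 0 < m v w → G.Adj v w) →
      (∀ v, ∑ w, m v w = 2) →
      ∃ σ : Equiv.Perm V, (∀ v, G.Adj v (σ v)) ∧
        (∀ v w, m v w = (if σ v = w then 1 else 0) + (if σ w = v then 1 else 0)) ∧
        (1 / 2 : ℝ) * ∑ v, ∑ w, (m v w : ℝ) * c v w = ∑ v, c v (σ v)) := by
  constructor
  · intro σ hσ
    refine ⟨fun v w => Nat.add_comm _ _, ?_, ?_, deg_formula σ, weight_formula c hc σ⟩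
    · intro v
      have hne : σ v ≠ v := (hσ v).ne'
      simp [hne]
    · intro v w h
      by_cases h1 : σ v = w
      · rw [← h1]; exact hσ v
      · by_cases h2 : σ w = v
        · have := hσ w
          rw [h2] at this
          exact this.symm
        · simp [h1, h2] at h
  · intro m hsym hdiag hGadj hdeg
    obtain ⟨σ, -, hgood⟩ := orient m hsym hdiag hdeg univ (fun v _ w _ => mem_univ w)
    have hpos : ∀ v, 0 < m v (σ v) := fun v => (hgood v (mem_univ v)).1
    have h2c : ∀ v, σ (σ v) = v → m v (σ v) = 2 := fun v => (hgood v (mem_univ v)).2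
    have heq : ∀ v w, m v w = (if σ v = w then 1 else 0) + (if σ w = v then 1 else 0) := by
      intro v
      have hle : ∀ w ∈ univ,
          ((if σ v = w then 1 else 0) + (if σ w = v then 1 else 0) : ℕ) ≤ m v w := by
        intro w _
        by_cases e1 : σ v = w <;> by_cases e2 : σ w = v
        · have hσσ : σ (σ v) = v := by rw [e1, e2]
          have h2' := h2c v hσσ
          rw [← e1] at e2 ⊢
          simp only [e2]
          simp
          omega
        · rw [← e1] at e2 ⊢
          simp [e2]
          have := hpos v
          omega
        · simp [e1, e2]
          have h3 : 0 < m v w := by rw [hsym v w, ← e2]; exact hpos w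
          omega
        · simp [e1, e2]
      have hsums : ∑ w, ((if σ v = w then 1 else 0) + (if σ w = v then 1 else 0) : ℕ)
          = ∑ w, m v w := by rw [deg_formula, hdeg]
      intro w
      exact (((Finset.sum_eq_sum_iff_of_le hle).mp hsums) w (mem_univ w)).symm
    refine ⟨σ, fun v => hGadj v (σ v) (hpos v), heq, ?_⟩
    have hrw : (∑ v, ∑ w, (m v w : ℝ) * c v w)
        = ∑ v, ∑ w, (((if σ v = w then 1 else 0) + (if σ w = v then 1 else 0) : ℕ) : ℝ) * c v w :=
      Finset.sum_congr rfl fun v _ => Finset.sum_congr rfl fun w _ => by rw [heq v w]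
    rw [hrw]
    exact weight_formula c hc σ
end

section
/- Let X be a metric space, n ≥ 2, and p : Fin n → X a family of points. Let r and r' both be feasible systems of radii that attain the maximum of ∑_i r i over all feasible systems of radii, and let σ be a derangement of Fin n attaining the minimum of ∑_i dist (p i) (p (σ i)) over all derangements. If the orbit of an index i under σ has odd cardinality, then r i = r' i. (The optimal radii are uniquely determined on the vertices of each odd cycle of a minimum cycle cover.) -/
open Finset

section Aux

variable {X : Type*} [MetricSpace X] {n : ℕ}

open scoped Classical in
/-- The set of tight neighbors of `u` for the radii system `r`. -/
noncomputable def tightNbhd (p : Fin n → X) (r : Fin n → ℝ) (u : Fin n) : Finset (Fin n) :=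
  Finset.univ.filter (fun j => u ≠ j ∧ r u + r j = dist (p u) (p j))

lemma mem_tightNbhd {p : Fin n → X} {r : Fin n → ℝ} {u j : Fin n} :
    j ∈ tightNbhd p r u ↔ u ≠ j ∧ r u + r j = dist (p u) (p j) := by
  simp [tightNbhd]

lemma tightNbhd_symm {p : Fin n → X} {r : Fin n → ℝ} {u j : Fin n}
    (h : j ∈ tightNbhd p r u) : u ∈ tightNbhd p r j := by
  rw [mem_tightNbhd] at h ⊢
  exact ⟨h.1.symm, by rw [dist_comm, ← h.2]; ring⟩

/-- If an improving set exists, `r` was not optimal. -/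
lemma improve (hn : 2 ≤ n) (p : Fin n → X) (r : Fin n → ℝ)
    (hr0 : ∀ i, 0 ≤ r i)
    (hr : ∀ i j, i ≠ j → r i + r j ≤ dist (p i) (p j))
    (hropt : ∀ s : Fin n → ℝ, (∀ i, 0 ≤ s i) →
      (∀ i j, i ≠ j → s i + s j ≤ dist (p i) (p j)) → ∑ i, s i ≤ ∑ i, r i)
    (I B : Finset (Fin n)) (hIB : Disjoint I B)
    (hBpos : ∀ v ∈ B, 0 < r v)
    (htight : ∀ u ∈ I, ∀ j, u ≠ j → r u + r j = dist (p u) (p j) → j ∈ B)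
    (hcard : B.card < I.card) : False := by
  have hne : (Finset.univ : Finset (Fin n × Fin n)).Nonempty := by
    refine ⟨(⟨0, by omega⟩, ⟨0, by omega⟩), mem_univ _⟩
  have hne' : (Finset.univ : Finset (Fin n)).Nonempty := ⟨⟨0, by omega⟩, mem_univ _⟩
  classical
  set g : Fin n × Fin n → ℝ := fun q =>
    if r q.1 + r q.2 = dist (p q.1) (p q.2) ∨ q.1 = q.2 then 1
    else (dist (p q.1) (p q.2) - r q.1 - r q.2) / 2 with hg
  set h : Fin n → ℝ := fun v => if v ∈ B then r v else 1 with hh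
  set t : ℝ := min (univ.inf' hne g) (univ.inf' hne' h) with ht
  have hgpos : ∀ q : Fin n × Fin n, 0 < g q := by
    intro q
    rw [hg]
    dsimp only
    split_ifs with hq
    · norm_num
    · push_neg at hq
      have := hr q.1 q.2 hq.2
      have : r q.1 + r q.2 < dist (p q.1) (p q.2) := lt_of_le_of_ne this hq.1
      linarith
  have hhpos : ∀ v, 0 < h v := by
    intro v; rw [hh]; dsimp only; split_ifs with hv
    · exact hBpos v hv
    · norm_num
  have htpos : 0 < t := by
    rw [ht]
    apply lt_min
    · exact (Finset.lt_inf'_iff hne).2 (fun q _ => hgpos q)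
    · exact (Finset.lt_inf'_iff hne').2 (fun v _ => hhpos v)
  have htg : ∀ q : Fin n × Fin n, t ≤ g q := fun q =>
    le_trans (min_le_left _ _) (Finset.inf'_le _ (mem_univ q))
  have hth : ∀ v, t ≤ h v := fun v =>
    le_trans (min_le_right _ _) (Finset.inf'_le _ (mem_univ v))
  set s : Fin n → ℝ := fun j => r j + (if j ∈ I then t else 0) - (if j ∈ B then t else 0)
    with hs
  have hIB' : ∀ j, j ∈ I → j ∉ B := fun j hj => Finset.disjoint_left.1 hIB hj
  have hs0 : ∀ j, 0 ≤ s j := by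
    intro j
    rw [hs]; dsimp only
    by_cases hj : j ∈ B
    · have := hth j
      rw [hh] at this; simp only [hj, if_pos] at this
      have hjI : j ∉ I := fun hI => hIB' j hI hj
      simp only [hj, hjI, if_pos, if_neg, if_false]
      linarith
    · simp only [hj, if_neg, if_false]
      have := hr0 j
      split_ifs <;> linarith
  have hsfeas : ∀ a b : Fin n, a ≠ b → s a + s b ≤ dist (p a) (p b) := by
    intro a b hab
    by_cases htight' : r a + r b = dist (p a) (p b)
    · -- tight edge
      by_cases ha : a ∈ I
      · have hbB : b ∈ B := htight a ha b hab htight'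
        have hbI : b ∉ I := fun hI => hIB' b hI hbB
        have haB : a ∉ B := hIB' a ha
        rw [hs]; dsimp only
        simp only [ha, hbB, hbI, haB, if_pos, if_neg, if_false]
        linarith
      · by_cases hb : b ∈ I
        · have haB : a ∈ B := htight b hb a hab.symm (by rw [dist_comm, ← htight']; ring)
          have haI : a ∉ I := ha
          have hbB : b ∉ B := hIB' b hb
          rw [hs]; dsimp only
          simp only [hb, haB, haI, hbB, if_pos, if_neg, if_false]
          linarith
        · rw [hs]; dsimp only
          simp only [ha, hb, if_neg, if_false]
          have h1 : (0:ℝ) ≤ if a ∈ B then t else 0 := by split_ifs <;> linarith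
          have h2 : (0:ℝ) ≤ if b ∈ B then t else 0 := by split_ifs <;> linarith
          linarith
    · -- slack edge
      have := htg (a, b)
      rw [hg] at this
      simp only [htight', hab, or_self, if_neg, not_false_iff, if_false] at this
      have hsa : s a ≤ r a + t := by
        rw [hs]; dsimp only
        have h1 : (0:ℝ) ≤ if a ∈ B then t else 0 := by split_ifs <;> linarith
        split_ifs <;> linarith
      have hsb : s b ≤ r b + t := by
        rw [hs]; dsimp only
        split_ifs <;> linarith
      linarith
  have hsum : ∑ j, s j = ∑ j, r j + I.card * t - B.card * t := by
    rw [hs]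
    dsimp only
    rw [Finset.sum_sub_distrib, Finset.sum_add_distrib]
    congr 1
    · congr 1
      rw [Finset.sum_ite_mem, Finset.univ_inter, Finset.sum_const, nsmul_eq_mul]
    · rw [Finset.sum_ite_mem, Finset.univ_inter, Finset.sum_const, nsmul_eq_mul]
  have hgt : ∑ j, r j < ∑ j, s j := by
    rw [hsum]
    have : (B.card : ℝ) * t < I.card * t := by
      apply mul_lt_mul_of_pos_right _ htpos
      exact_mod_cast hcard
    linarith
  exact absurd (hropt s hs0 hsfeas) (not_le.2 hgt)

/-- Hall condition for independent sets in the tight graph. -/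
lemma indep_hall (hn : 2 ≤ n) (p : Fin n → X) (r : Fin n → ℝ)
    (hr0 : ∀ i, 0 ≤ r i)
    (hr : ∀ i j, i ≠ j → r i + r j ≤ dist (p i) (p j))
    (hropt : ∀ s : Fin n → ℝ, (∀ i, 0 ≤ s i) →
      (∀ i j, i ≠ j → s i + s j ≤ dist (p i) (p j)) → ∑ i, s i ≤ ∑ i, r i)
    (I : Finset (Fin n)) (hind : ∀ u ∈ I, ∀ v ∈ I, v ∉ tightNbhd p r u) :
    I.card ≤ (I.biUnion (tightNbhd p r)).card := by
  classical
  by_contra hlt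
  push_neg at hlt
  set N := tightNbhd p r with hN
  set Z : Finset (Fin n) := (I.biUnion N).filter (fun v => r v = 0) with hZ
  -- unique I-neighbor of a zero vertex
  set uv : Fin n → Fin n := fun v =>
    if h : ∃ u ∈ I, v ∈ N u then h.choose else v with huv
  have huniq : ∀ v ∈ Z, ∀ u ∈ I, v ∈ N u → u = uv v := by
    intro v hvZ u hu hvNu
    rw [hZ, Finset.mem_filter] at hvZ
    obtain ⟨hvI, hv0⟩ := hvZ
    have hex : ∃ u ∈ I, v ∈ N u := ⟨u, hu, hvNu⟩
    have hspec := hex.choose_spec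
    rw [huv]; dsimp only
    rw [dif_pos hex]
    by_contra hne
    -- both u and u' := hex.choose are tight to v, with r v = 0; triangle ineq forces tightness
    set u' := hex.choose with hu'
    have hu'I : u' ∈ I := hspec.1
    have hvNu' : v ∈ N u' := hspec.2
    rw [hN, mem_tightNbhd] at hvNu hvNu'
    have hd : r u + r u' = dist (p u) (p v) + dist (p u') (p v) := by
      rw [← hvNu.2, ← hvNu'.2, hv0]; ring
    have htri : dist (p u) (p u') ≤ dist (p u) (p v) + dist (p v) (p u') :=
      dist_triangle _ _ _
    have hle : r u + r u' ≤ dist (p u) (p u') := hr u u' hne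
    have : r u + r u' = dist (p u) (p u') := by
      rw [dist_comm (p v) (p u')] at htri
      linarith
    exact hind u hu u' hu'I (by rw [hN, mem_tightNbhd]; exact ⟨hne, this⟩)
  set I' : Finset (Fin n) := I \ Z.image uv with hI'
  have hsub : I'.biUnion N ⊆ (I.biUnion N) \ Z := by
    intro v hv
    rw [Finset.mem_biUnion] at hv
    obtain ⟨u, huI', hvNu⟩ := hv
    rw [hI', Finset.mem_sdiff] at huI'
    rw [Finset.mem_sdiff]
    constructor
    · exact Finset.mem_biUnion.2 ⟨u, huI'.1, hvNu⟩
    · intro hvZ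
      exact huI'.2 (Finset.mem_image.2 ⟨v, hvZ, (huniq v hvZ u huI'.1 hvNu).symm⟩)
  have hZsub : Z ⊆ I.biUnion N := Finset.filter_subset _ _
  have hcard1 : (I'.biUnion N).card ≤ (I.biUnion N).card - Z.card := by
    calc (I'.biUnion N).card ≤ ((I.biUnion N) \ Z).card := Finset.card_le_card hsub
    _ = (I.biUnion N).card - Z.card := Finset.card_sdiff_of_subset hZsub
  have hcard2 : I.card - Z.card ≤ I'.card := by
    calc I.card - Z.card ≤ I.card - (Z.image uv).card :=
          Nat.sub_le_sub_left (Finset.card_image_le) _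
    _ ≤ I'.card := Finset.le_card_sdiff _ _
  have hZle : Z.card ≤ (I.biUnion N).card := Finset.card_le_card hZsub
  have hlt' : (I'.biUnion N).card < I'.card := by
    have : (I.biUnion N).card - Z.card < I.card - Z.card :=
      Nat.sub_lt_sub_right hZle hlt
    omega
  -- apply `improve` to I' and its (zero-free) neighborhood
  refine improve hn p r hr0 hr hropt I' (I'.biUnion N) ?_ ?_ ?_ hlt'
  · rw [Finset.disjoint_left]
    intro v hvI' hvB
    rw [Finset.mem_biUnion] at hvB
    obtain ⟨u, huI', hvNu⟩ := hvB
    rw [hI', Finset.mem_sdiff] at hvI' huI'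
    exact hind u huI'.1 v hvI'.1 hvNu
  · intro v hvB
    have := hsub hvB
    rw [Finset.mem_sdiff, hZ, Finset.mem_filter] at this
    have hv0 : r v ≠ 0 := fun h0 => this.2 ⟨this.1, h0⟩
    exact lt_of_le_of_ne (hr0 v) (Ne.symm hv0)
  · intro u hu j hne htight'
    exact Finset.mem_biUnion.2 ⟨u, hu, by rw [hN, mem_tightNbhd]; exact ⟨hne, htight'⟩⟩

/-- Hall condition for all sets in the tight graph. -/
lemma full_hall (hn : 2 ≤ n) (p : Fin n → X) (r : Fin n → ℝ)
    (hr0 : ∀ i, 0 ≤ r i)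
    (hr : ∀ i j, i ≠ j → r i + r j ≤ dist (p i) (p j))
    (hropt : ∀ s : Fin n → ℝ, (∀ i, 0 ≤ s i) →
      (∀ i j, i ≠ j → s i + s j ≤ dist (p i) (p j)) → ∑ i, s i ≤ ∑ i, r i)
    (S : Finset (Fin n)) : S.card ≤ (S.biUnion (tightNbhd p r)).card := by
  classical
  set N := tightNbhd p r with hN
  set I : Finset (Fin n) := S.filter (fun u => u ∉ S.biUnion N) with hI
  have hind : ∀ u ∈ I, ∀ v ∈ I, v ∉ N u := by
    intro u hu v hv hvNu
    rw [hI, Finset.mem_filter] at hu hv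
    exact hv.2 (Finset.mem_biUnion.2 ⟨u, hu.1, hvNu⟩)
  have hIhall := indep_hall hn p r hr0 hr hropt I hind
  rw [← hN] at hIhall
  have hdisj : Disjoint (I.biUnion N) (S.filter (fun u => u ∈ S.biUnion N)) := by
    rw [Finset.disjoint_left]
    intro w hw hwS
    rw [Finset.mem_biUnion] at hw
    obtain ⟨u, huI, hwNu⟩ := hw
    rw [Finset.mem_filter] at hwS
    have : u ∈ S.biUnion N :=
      Finset.mem_biUnion.2 ⟨w, hwS.1, tightNbhd_symm hwNu⟩
    rw [hI, Finset.mem_filter] at huI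
    exact huI.2 this
  have hsub1 : I.biUnion N ⊆ S.biUnion N :=
    Finset.biUnion_subset_biUnion_of_subset_left _ (Finset.filter_subset _ _)
  have hsub2 : S.filter (fun u => u ∈ S.biUnion N) ⊆ S.biUnion N :=
    fun u hu => (Finset.mem_filter.1 hu).2
  have hunion : (I.biUnion N) ∪ S.filter (fun u => u ∈ S.biUnion N) ⊆ S.biUnion N :=
    Finset.union_subset hsub1 hsub2
  have hcards : I.card + (S.filter (fun u => u ∈ S.biUnion N)).card ≤ (S.biUnion N).card := by
    calc I.card + (S.filter (fun u => u ∈ S.biUnion N)).card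
        ≤ (I.biUnion N).card + (S.filter (fun u => u ∈ S.biUnion N)).card := by omega
    _ = ((I.biUnion N) ∪ S.filter (fun u => u ∈ S.biUnion N)).card :=
        (Finset.card_union_of_disjoint hdisj).symm
    _ ≤ (S.biUnion N).card := Finset.card_le_card hunion
  have hSsplit : (S.filter (fun u => u ∈ S.biUnion N)).card + I.card = S.card := by
    rw [hI]
    exact Finset.card_filter_add_card_filter_not (fun u => u ∈ S.biUnion N)
  omega

/-- Key lemma: an optimal system of radii is tight along every minimum derangement;
indeed there is a derangement all of whose edges are tight. -/
lemma exists_tight_derangement (hn : 2 ≤ n) (p : Fin n → X) (r : Fin n → ℝ)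
    (hr0 : ∀ i, 0 ≤ r i)
    (hr : ∀ i j, i ≠ j → r i + r j ≤ dist (p i) (p j))
    (hropt : ∀ s : Fin n → ℝ, (∀ i, 0 ≤ s i) →
      (∀ i j, i ≠ j → s i + s j ≤ dist (p i) (p j)) → ∑ i, s i ≤ ∑ i, r i) :
    ∃ τ : Equiv.Perm (Fin n), (∀ j, τ j ≠ j) ∧
      ∀ j, r j + r (τ j) = dist (p j) (p (τ j)) := by
  classical
  obtain ⟨f, hfinj, hf⟩ := (Finset.all_card_le_biUnion_card_iff_existsInjective'
    (tightNbhd p r)).1 (full_hall hn p r hr0 hr hropt)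
  have hfbij : Function.Bijective f := Finite.injective_iff_bijective.1 hfinj
  refine ⟨Equiv.ofBijective f hfbij, ?_, ?_⟩
  · intro j
    have := (mem_tightNbhd.1 (hf j)).1
    simpa [Equiv.ofBijective] using this.symm
  · intro j
    have := (mem_tightNbhd.1 (hf j)).2
    simpa [Equiv.ofBijective] using this

end Aux

/-- Uniqueness of optimal radii on odd cycles: if `r` and `r'` are both optimal
feasible systems of radii, and `σ` is a minimum-weight cycle cover (derangement),
then `r` and `r'` agree at every index whose orbit under `σ` has odd cardinality. -/
theorem optimal_radii_unique_on_odd_cycles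
    {X : Type*} [MetricSpace X] (n : ℕ) (hn : 2 ≤ n) (p : Fin n → X)
    (r r' : Fin n → ℝ)
    (hr0 : ∀ i, 0 ≤ r i)
    (hr : ∀ i j, i ≠ j → r i + r j ≤ dist (p i) (p j))
    (hr'0 : ∀ i, 0 ≤ r' i)
    (hr' : ∀ i j, i ≠ j → r' i + r' j ≤ dist (p i) (p j))
    (hropt : ∀ s : Fin n → ℝ, (∀ i, 0 ≤ s i) →
      (∀ i j, i ≠ j → s i + s j ≤ dist (p i) (p j)) → ∑ i, s i ≤ ∑ i, r i)
    (hr'opt : ∀ s : Fin n → ℝ, (∀ i, 0 ≤ s i) →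
      (∀ i j, i ≠ j → s i + s j ≤ dist (p i) (p j)) → ∑ i, s i ≤ ∑ i, r' i)
    (σ : Equiv.Perm (Fin n)) (hσ : ∀ i, σ i ≠ i)
    (hσmin : ∀ σ' : Equiv.Perm (Fin n), (∀ i, σ' i ≠ i) →
      ∑ i, dist (p i) (p (σ i)) ≤ ∑ i, dist (p i) (p (σ' i)))
    (i : Fin n) (hodd : Odd (Set.ncard {j | σ.SameCycle i j})) :
    r i = r' i := by
  classical
  -- both optima have the same total
  have hsum_eq : ∑ j, r j = ∑ j, r' j :=
    le_antisymm (hr'opt r hr0 hr) (hropt r' hr'0 hr')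
  -- a tight derangement exists, so the minimum derangement weight is ≤ 2 ∑ r
  obtain ⟨τ, hτd, hτt⟩ := exists_tight_derangement hn p r hr0 hr hropt
  have hτsum : ∑ j, dist (p j) (p (τ j)) = 2 * ∑ j, r j := by
    have : ∑ j, dist (p j) (p (τ j)) = ∑ j, (r j + r (τ j)) := by
      exact Finset.sum_congr rfl (fun j _ => (hτt j).symm)
    rw [this, Finset.sum_add_distrib, Equiv.sum_comp τ r]
    ring
  have hmin_le : ∑ j, dist (p j) (p (σ j)) ≤ 2 * ∑ j, r j := by
    rw [← hτsum]; exact hσmin τ hτd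
  -- but feasibility forces ≥, so along σ all constraints are tight, for both r and r'
  have key : ∀ (s : Fin n → ℝ), (∀ a b : Fin n, a ≠ b → s a + s b ≤ dist (p a) (p b)) →
      (∑ j, s j = ∑ j, r j) → ∀ j, s j + s (σ j) = dist (p j) (p (σ j)) := by
    intro s hsfeas hssum
    have h1 : ∑ j, (dist (p j) (p (σ j)) - (s j + s (σ j))) = 
        ∑ j, dist (p j) (p (σ j)) - 2 * ∑ j, s j := by
      rw [Finset.sum_sub_distrib, Finset.sum_add_distrib, Equiv.sum_comp σ s]
      ring
    have h2 : ∑ j, (dist (p j) (p (σ j)) - (s j + s (σ j))) ≤ 0 := by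
      rw [h1, hssum]; linarith
    have h3 : ∀ j ∈ Finset.univ, 0 ≤ dist (p j) (p (σ j)) - (s j + s (σ j)) := by
      intro j _
      have := hsfeas j (σ j) (hσ j).symm
      linarith
    have h4 : ∑ j, (dist (p j) (p (σ j)) - (s j + s (σ j))) = 0 :=
      le_antisymm h2 (Finset.sum_nonneg h3)
    have h5 := (Finset.sum_eq_zero_iff_of_nonneg h3).1 h4
    intro j
    have := h5 j (Finset.mem_univ j)
    linarith
  have hrt := key r hr rfl
  have hr't := key r' hr' hsum_eq.symm
  -- f := r - r' alternates along σ
  set f : Fin n → ℝ := fun j => r j - r' j with hf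
  have halt : ∀ j, f (σ j) = - f j := by
    intro j
    have h1 := hrt j
    have h2 := hr't j
    rw [hf]; dsimp only; linarith
  have hpow : ∀ t : ℕ, f ((σ ^ t) i) = (-1 : ℝ) ^ t * f i := by
    intro t
    induction t with
    | zero => simp
    | succ t ih =>
      have : (σ ^ (t + 1)) i = σ ((σ ^ t) i) := by
        rw [pow_succ', Equiv.Perm.mul_apply]
      rw [this, halt, ih]
      ring
  -- the orbit has odd cardinality k, and σ^k i = i
  have hisupp : i ∈ σ.support := Equiv.Perm.mem_support.2 (hσ i)
  have horbit : {j | σ.SameCycle i j} = ↑(σ.cycleOf i).support := by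
    ext j
    simp only [Set.mem_setOf_eq, Finset.coe_sort_coe, Finset.mem_coe,
      Equiv.Perm.mem_support_cycleOf_iff]
    exact ⟨fun h => ⟨h, hisupp⟩, fun h => h.1⟩
  set k : ℕ := (σ.cycleOf i).support.card with hk
  have hncard : Set.ncard {j | σ.SameCycle i j} = k := by
    rw [horbit, Set.ncard_coe_finset]
  have hcyc : (σ.cycleOf i).IsCycle := Equiv.Perm.isCycle_cycleOf σ (hσ i)
  have horder : orderOf (σ.cycleOf i) = k := hcyc.orderOf
  have hki : (σ ^ k) i = i := by
    rw [← Equiv.Perm.cycleOf_pow_apply_self, ← horder, pow_orderOf_eq_one]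
    rfl
  have hkodd : Odd k := by rwa [hncard] at hodd
  have := hpow k
  rw [hki, hkodd.neg_one_pow] at this
  have hfi : f i = 0 := by linarith
  rw [hf] at hfi
  dsimp only at hfi
  linarith
end

section
/- Let X be a metric space, n ≥ 2, and p : Fin n → X a family of points. Let a, b : Fin n → ℝ satisfy a i + b j ≤ dist (p i) (p j) for all i ≠ j (dual variables of the Hungarian algorithm on the bipartite double cover, visualized as red and blue balls with no bichromatic overlaps). Define r i = (a i + b i) / 2. Then: (a) r i + r j ≤ dist (p i) (p j) for all i ≠ j; and (b) if moreover there is a derangement σ of Fin n with a i + b (σ i) = dist (p i) (p (σ i)) for every i, then ∑_i r i = (1/2) · ∑_i dist (p i) (p (σ i)), and consequently ∑_i r' i ≤ ∑_i r i for every feasible system of radii r'. -/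
/-- Averaging the dual variables of the Hungarian algorithm on the bipartite
double cover yields a feasible system of radii; if moreover the duals are tight
along a derangement (a perfect matching / cycle cover), the averaged radii are
optimal, with sum equal to half the weight of the cycle cover. -/
theorem averaged_dual_variables_give_optimal_radii
    {X : Type*} [MetricSpace X] (n : ℕ) (hn : 2 ≤ n) (p : Fin n → X)
    (a b : Fin n → ℝ)
    (hab : ∀ i j, i ≠ j → a i + b j ≤ dist (p i) (p j))
    (r : Fin n → ℝ) (hrdef : ∀ i, r i = (a i + b i) / 2) :
    (∀ i j, i ≠ j → r i + r j ≤ dist (p i) (p j)) ∧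
    (∀ σ : Equiv.Perm (Fin n), (∀ i, σ i ≠ i) →
      (∀ i, a i + b (σ i) = dist (p i) (p (σ i))) →
      (∑ i, r i = (1 / 2) * ∑ i, dist (p i) (p (σ i)) ∧
        ∀ r' : Fin n → ℝ, (∀ i, 0 ≤ r' i) →
          (∀ i j, i ≠ j → r' i + r' j ≤ dist (p i) (p j)) →
          ∑ i, r' i ≤ ∑ i, r i)) := by
  constructor
  · intro i j hij
    have h1 := hab i j hij
    have h2 := hab j i (Ne.symm hij)
    rw [hrdef i, hrdef j]
    have hd : dist (p j) (p i) = dist (p i) (p j) := dist_comm _ _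
    linarith
  · intro σ hder htight
    have hsum : ∑ i, r i = (1 / 2) * ∑ i, dist (p i) (p (σ i)) := by
      have hb : ∑ i, b (σ i) = ∑ i, b i := Equiv.sum_comp σ b
      calc ∑ i, r i = ∑ i, (a i + b i) / 2 := by
            exact Finset.sum_congr rfl fun i _ => hrdef i
        _ = (1 / 2) * ∑ i, (a i + b i) := by
            rw [Finset.mul_sum]; exact Finset.sum_congr rfl fun i _ => by ring
        _ = (1 / 2) * ∑ i, (a i + b (σ i)) := by
            rw [Finset.sum_add_distrib, Finset.sum_add_distrib, hb]
        _ = (1 / 2) * ∑ i, dist (p i) (p (σ i)) := by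
            rw [Finset.sum_congr rfl fun i _ => htight i]
    refine ⟨hsum, fun r' _ hfeas => ?_⟩
    have key : ∑ i, (r' i + r' (σ i)) ≤ ∑ i, dist (p i) (p (σ i)) :=
      Finset.sum_le_sum fun i _ => hfeas i (σ i) (Ne.symm (hder i))
    have h2 : ∑ i, r' (σ i) = ∑ i, r' i := Equiv.sum_comp σ r'
    rw [Finset.sum_add_distrib, h2] at key
    rw [hsum]
    linarith
end

section
/- Let X be a metric space, n ≥ 2, and p : Fin n → X a family of points. Let r be a feasible system of radii attaining the maximum of ∑_i r i over all feasible systems, and let σ be a derangement of Fin n attaining the minimum of ∑_i dist (p i) (p (σ i)) over all derangements. Then for every index i, r i + r (σ i) = dist (p i) (p (σ i)). (Complementary slackness: every edge of a minimum cycle cover is realized by a pair of touching balls in every optimal system of nonoverlapping balls.) -/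
/-!
For a feasible `r` and a derangement `τ`, summing `r i + r (τ i) ≤ dist (p i) (p (τ i))` gives
`2 ∑ r ≤ ∑ dist (p i) (p (τ i))`, with equality iff every pair `i, τ i` touches. So it suffices
to find, for an optimal `r`, one derangement made of touching pairs: its weight `2 ∑ r` is then
the minimum, and a minimum derangement `σ` has equality termwise.

Such a derangement is a perfect matching of the touching graph, given by Hall's theorem. If
Hall's condition failed, a deficient set could be made independent and free of neighbours of
radius `0` (a ball of radius `0` touching two balls forces them to touch each other); growing
its balls by a small `ε` and shrinking those of its neighbours by `ε` would then keep `r`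
feasible and increase `∑ r`.
-/

open Finset Filter Topology

structure IsFeasibleRadii {ι X : Type*} [PseudoMetricSpace X] (p : ι → X) (r : ι → ℝ) : Prop where
  nonneg : ∀ i, 0 ≤ r i
  add_le_dist : ∀ i j, i ≠ j → r i + r j ≤ dist (p i) (p j)

lemma Finset.exists_disjoint_biUnion_card_lt {α : Type*} [DecidableEq α] {t : α → Finset α}
    (ht : ∀ i j, j ∈ t i → i ∈ t j) {S : Finset α} (hS : #(S.biUnion t) < #S) :
    ∃ A : Finset α, Disjoint A (A.biUnion t) ∧ #(A.biUnion t) < #A := by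
  refine ⟨S \ S.biUnion t,
    disjoint_sdiff_self_left.mono_right (biUnion_subset_biUnion_of_subset_left t sdiff_subset), ?_⟩
  have hsub : (S \ S.biUnion t).biUnion t ⊆ S.biUnion t \ S := by
    intro j hj
    obtain ⟨i, hi, hji⟩ := mem_biUnion.1 hj
    refine mem_sdiff.2 ⟨mem_biUnion.2 ⟨i, (mem_sdiff.1 hi).1, hji⟩, fun hjS => ?_⟩
    exact (mem_sdiff.1 hi).2 (mem_biUnion.2 ⟨j, hjS, ht i j hji⟩)
  have h₁ := card_sdiff_add_card_inter S (S.biUnion t)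
  have h₂ := card_sdiff_add_card_inter (S.biUnion t) S
  rw [inter_comm] at h₂
  have := card_le_card hsub
  omega

section Touching

variable {ι X : Type*} [Fintype ι] [DecidableEq ι] [PseudoMetricSpace X]

noncomputable def touching (p : ι → X) (r : ι → ℝ) (i : ι) : Finset ι :=
  {j | i ≠ j ∧ r i + r j = dist (p i) (p j)}

variable {p : ι → X} {r : ι → ℝ}

@[simp]
lemma mem_touching {i j : ι} : j ∈ touching p r i ↔ i ≠ j ∧ r i + r j = dist (p i) (p j) := by
  simp [touching]

lemma mem_touching_comm {i j : ι} : j ∈ touching p r i ↔ i ∈ touching p r j := by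
  simp only [mem_touching, ne_comm, add_comm (r i), dist_comm (p i)]

lemma mem_touching_of_radius_eq_zero (hr : IsFeasibleRadii p r) {i i' j : ι} (hii' : i ≠ i')
    (hj : j ∈ touching p r i) (hj' : j ∈ touching p r i') (hj0 : r j = 0) :
    i' ∈ touching p r i := by
  rw [mem_touching] at *
  refine ⟨hii', le_antisymm (hr.add_le_dist i i' hii') ?_⟩
  linarith [dist_triangle_right (p i) (p i') (p j)]

lemma exists_pos_biUnion_touching_card_lt (hr : IsFeasibleRadii p r) {A : Finset ι}
    (hA : Disjoint A (A.biUnion (touching p r))) (hcard : #(A.biUnion (touching p r)) < #A) :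
    ∃ A' ⊆ A, (∀ j ∈ A'.biUnion (touching p r), 0 < r j) ∧
      #(A'.biUnion (touching p r)) < #A' := by
  set N := A.biUnion (touching p r)
  set P : ι → Prop := fun i => ∀ j ∈ touching p r i, 0 < r j
  refine ⟨A.filter P, filter_subset _ _, fun j hj => ?_, ?_⟩
  · obtain ⟨i, hi, hji⟩ := mem_biUnion.1 hj
    exact (mem_filter.1 hi).2 j hji
  -- `A` is independent, so a ball of radius `0` touches at most one ball of `A`.
  have hzero : #(A.filter (¬ P ·)) ≤ #(N.filter (r · = 0)) := by
    refine card_le_card_of_forall_subsingleton (fun i j => j ∈ touching p r i) (fun i hi => ?_) ?_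
    · obtain ⟨hiA, hiP⟩ := mem_filter.1 hi
      simp only [P, not_forall, not_lt] at hiP
      obtain ⟨j, hji, hj⟩ := hiP
      exact ⟨j, mem_filter.2 ⟨mem_biUnion.2 ⟨i, hiA, hji⟩, hj.antisymm (hr.nonneg j)⟩, hji⟩
    · intro j hj i hi i' hi'
      by_contra hii'
      exact disjoint_left.1 hA (mem_filter.1 hi'.1).1 <| mem_biUnion.2 ⟨i, (mem_filter.1 hi.1).1,
        mem_touching_of_radius_eq_zero hr hii' hi.2 hi'.2 (mem_filter.1 hj).2⟩
  have hpos : (A.filter P).biUnion (touching p r) ⊆ N.filter (¬ r · = 0) := by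
    intro j hj
    obtain ⟨i, hi, hji⟩ := mem_biUnion.1 hj
    exact mem_filter.2 ⟨mem_biUnion.2 ⟨i, (mem_filter.1 hi).1, hji⟩,
      ((mem_filter.1 hi).2 j hji).ne'⟩
  have := card_le_card hpos
  have := card_filter_add_card_filter_not (s := A) P
  have := card_filter_add_card_filter_not (s := N) (r · = 0)
  omega

lemma exists_isFeasibleRadii_sum_lt (hr : IsFeasibleRadii p r) {A : Finset ι}
    (hA : Disjoint A (A.biUnion (touching p r)))
    (hpos : ∀ j ∈ A.biUnion (touching p r), 0 < r j)
    (hcard : #(A.biUnion (touching p r)) < #A) :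
    ∃ r', IsFeasibleRadii p r' ∧ ∑ i, r i < ∑ i, r' i := by
  set B := A.biUnion (touching p r)
  have hslack : ∀ i ∈ A, ∀ j ∉ B, i ≠ j → r i + r j < dist (p i) (p j) := fun i hi j hj hij =>
    (hr.add_le_dist i j hij).lt_of_ne fun h => hj (mem_biUnion.2 ⟨i, hi, mem_touching.2 ⟨hij, h⟩⟩)
  have hsmall : ∀ᶠ ε in 𝓝 (0 : ℝ), ∀ i j, (j ∈ B → ε ≤ r j) ∧
      (i ∈ A → j ∉ B → i ≠ j → r i + r j + 2 * ε ≤ dist (p i) (p j)) := by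
    simp only [eventually_all, eventually_and]
    refine fun i j => ⟨fun hj => eventually_le_nhds (hpos j hj), fun hi hj hij => ?_⟩
    filter_upwards [eventually_le_nhds (half_pos (sub_pos.2 (hslack i hi j hj hij)))] with ε hε
    linarith
  obtain ⟨ε, hε, hε0⟩ := ((hsmall.filter_mono nhdsWithin_le_nhds).and
    (self_mem_nhdsWithin : ∀ᶠ ε in 𝓝[>] (0 : ℝ), 0 < ε)).exists
  set r' : ι → ℝ := fun i => r i + (if i ∈ A then ε else 0) - (if i ∈ B then ε else 0)
  have hgrow : ∀ i j, i ≠ j → i ∈ A → r' i + r' j ≤ dist (p i) (p j) := by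
    intro i j hij hi
    by_cases hj : j ∈ B
    · simp only [r', hi, hj, disjoint_left.1 hA hi, disjoint_right.1 hA hj, if_true, if_false]
      linarith [hr.add_le_dist i j hij]
    · simp only [r', hi, hj, disjoint_left.1 hA hi, if_true, if_false]
      split_ifs <;> linarith [(hε i j).2 hi hj hij, hr.nonneg j]
  refine ⟨r', ⟨fun i => ?_, fun i j hij => ?_⟩, ?_⟩
  · by_cases hi : i ∈ B
    · simp only [r', hi, disjoint_right.1 hA hi, if_true, if_false]
      linarith [(hε i i).1 hi]
    · simp only [r', hi, if_false]
      split_ifs <;> linarith [hr.nonneg i]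
  · by_cases hi : i ∈ A
    · exact hgrow i j hij hi
    by_cases hj : j ∈ A
    · rw [add_comm, dist_comm]
      exact hgrow j i hij.symm hj
    simp only [r', hi, hj, if_false]
    split_ifs <;> linarith [hr.add_le_dist i j hij]
  · have hsum : ∑ i, r' i = ∑ i, r i + #A * ε - #B * ε := by
      simp only [r', sum_add_distrib, sum_sub_distrib, sum_ite_mem, univ_inter, sum_const,
        nsmul_eq_mul]
    have : (#B : ℝ) * ε < #A * ε := mul_lt_mul_of_pos_right (by exact_mod_cast hcard) hε0
    linarith

lemma card_le_card_biUnion_touching (hr : IsFeasibleRadii p r)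
    (hmax : ∀ r', IsFeasibleRadii p r' → ∑ i, r' i ≤ ∑ i, r i) (S : Finset ι) :
    #S ≤ #(S.biUnion (touching p r)) := by
  by_contra! hS
  obtain ⟨A, hA, hAcard⟩ :=
    exists_disjoint_biUnion_card_lt (fun i j => mem_touching_comm.1) hS
  obtain ⟨A', hA'A, hpos, hA'card⟩ := exists_pos_biUnion_touching_card_lt hr hA hAcard
  have hA' : Disjoint A' (A'.biUnion (touching p r)) :=
    hA.mono hA'A (biUnion_subset_biUnion_of_subset_left _ hA'A)
  obtain ⟨r', hr', hlt⟩ := exists_isFeasibleRadii_sum_lt hr hA' hpos hA'card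
  exact (hmax r' hr').not_gt hlt

theorem exists_perm_forall_mem_touching (hr : IsFeasibleRadii p r)
    (hmax : ∀ r', IsFeasibleRadii p r' → ∑ i, r' i ≤ ∑ i, r i) :
    ∃ τ : Equiv.Perm ι, ∀ i, τ i ∈ touching p r i := by
  obtain ⟨f, hf, hft⟩ := (all_card_le_biUnion_card_iff_exists_injective _).1
    (card_le_card_biUnion_touching hr hmax)
  exact ⟨Equiv.ofBijective f hf.bijective_of_finite, hft⟩

end Touching

lemma Equiv.Perm.sum_add_comp {ι : Type*} [Fintype ι] (r : ι → ℝ) (σ : Equiv.Perm ι) :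
    ∑ i, (r i + r (σ i)) = 2 * ∑ i, r i := by
  rw [sum_add_distrib, Equiv.sum_comp, two_mul]

theorem complementary_slackness_touching_general
    {X : Type*} [MetricSpace X] (n : ℕ) (p : Fin n → X)
    (r : Fin n → ℝ)
    (hr0 : ∀ i, 0 ≤ r i)
    (hr : ∀ i j, i ≠ j → r i + r j ≤ dist (p i) (p j))
    (hropt : ∀ r' : Fin n → ℝ, (∀ i, 0 ≤ r' i) →
      (∀ i j, i ≠ j → r' i + r' j ≤ dist (p i) (p j)) → ∑ i, r' i ≤ ∑ i, r i)
    (σ : Equiv.Perm (Fin n)) (hσ : ∀ i, σ i ≠ i)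
    (hσmin : ∀ σ' : Equiv.Perm (Fin n), (∀ i, σ' i ≠ i) →
      ∑ i, dist (p i) (p (σ i)) ≤ ∑ i, dist (p i) (p (σ' i))) :
    ∀ i, r i + r (σ i) = dist (p i) (p (σ i)) := by
  obtain ⟨τ, hτ⟩ := exists_perm_forall_mem_touching ⟨hr0, hr⟩ fun r' h => hropt r' h.1 h.2
  have hτ_sum : ∑ i, dist (p i) (p (τ i)) = 2 * ∑ i, r i := by
    rw [← Equiv.Perm.sum_add_comp r τ]
    exact sum_congr rfl fun i _ => (mem_touching.1 (hτ i)).2.symm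
  have hσ_le : ∑ i, dist (p i) (p (σ i)) ≤ ∑ i, (r i + r (σ i)) := by
    rw [Equiv.Perm.sum_add_comp, ← hτ_sum]
    exact hσmin τ fun i => (mem_touching.1 (hτ i)).1.symm
  have hσ_ge : ∀ i ∈ univ, r i + r (σ i) ≤ dist (p i) (p (σ i)) :=
    fun i _ => hr i (σ i) (hσ i).symm
  exact fun i => (sum_eq_sum_iff_of_le hσ_ge).1 ((sum_le_sum hσ_ge).antisymm hσ_le) i (mem_univ i)

/-- Complementary slackness: every edge of a minimum cycle cover is realized by
a pair of touching balls in every optimal system of nonoverlapping balls. -/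
theorem complementary_slackness_touching
    {X : Type*} [MetricSpace X] (n : ℕ) (hn : 2 ≤ n) (p : Fin n → X)
    (r : Fin n → ℝ)
    (hr0 : ∀ i, 0 ≤ r i)
    (hr : ∀ i j, i ≠ j → r i + r j ≤ dist (p i) (p j))
    (hropt : ∀ r' : Fin n → ℝ, (∀ i, 0 ≤ r' i) →
      (∀ i j, i ≠ j → r' i + r' j ≤ dist (p i) (p j)) → ∑ i, r' i ≤ ∑ i, r i)
    (σ : Equiv.Perm (Fin n)) (hσ : ∀ i, σ i ≠ i)
    (hσmin : ∀ σ' : Equiv.Perm (Fin n), (∀ i, σ' i ≠ i) →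
      ∑ i, dist (p i) (p (σ i)) ≤ ∑ i, dist (p i) (p (σ' i))) :
    ∀ i, r i + r (σ i) = dist (p i) (p (σ i)) :=
  complementary_slackness_touching_general n p r hr0 hr hropt σ hσ hσmin
end

section
/- Let X be a metric space, n ≥ 2, and p : Fin n → X a family of points, with nearest-neighbor distances δ i = min over j ≠ i of dist (p i) (p j). Let σ be a derangement of Fin n attaining the minimum of ∑_i dist (p i) (p (σ i)) over all derangements. Then for every index i, dist (p i) (p (σ i)) ≤ δ i + δ (σ i). (Each edge of a minimum cycle cover of the complete geometric graph belongs to the nearest-neighbor overlap graph.) -/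
/-!
A minimum derangement is an optimal assignment, so it carries dual potentials. Let `r'`
exchange its successor for `σ r` at cost `W r r' = d(r', σ r) - d(r', σ r')`; such an arc is
admissible when `σ r ≠ r'`. Following a cycle of admissible arcs turns `σ` into another
derangement, so every such cycle has nonnegative weight, and therefore shortest simple walks give
potentials `φ` with `φ r' ≤ φ r + W r r'` on admissible arcs. The arcs `σ⁻¹ i → σ i` have total
weight zero, so they are all tight. Comparing the tight arc `σ⁻¹ a → σ a` with the chain
`σ⁻¹ a → σ⁻¹ u → a → v → σ a`, where `u` and `v` are nearest neighbours of `a` and `σ a`, and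
applying the triangle inequality twice gives `2 d(a, σ a) ≤ 2 d(a, u) + 2 d(σ a, v)`.
-/

namespace List

variable {V : Type*}

def walkWeight (W : V → V → ℝ) : List V → ℝ
  | x :: y :: l => W x y + walkWeight W (y :: l)
  | _ => 0

variable (W : V → V → ℝ)

@[simp] theorem walkWeight_nil : walkWeight W [] = 0 := rfl
@[simp] theorem walkWeight_singleton (x : V) : walkWeight W [x] = 0 := rfl
@[simp] theorem walkWeight_cons_cons (x y : V) (l : List V) :
    walkWeight W (x :: y :: l) = W x y + walkWeight W (y :: l) := rfl

theorem walkWeight_append_cons (s t : List V) (a : V) :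
    walkWeight W (s ++ a :: t) = walkWeight W (s ++ [a]) + walkWeight W (a :: t) := by
  induction s with
  | nil => simp
  | cons x s ih =>
    cases s with
    | nil => simp
    | cons y s => simp only [cons_append, walkWeight_cons_cons] at ih ⊢; rw [ih]; ring

theorem walkWeight_eq_sum_zip (l : List V) :
    walkWeight W l = ((l.dropLast.zip l.tail).map fun p => W p.1 p.2).sum := by
  induction l using twoStepInduction <;> simp_all

theorem zip_cons_append_singleton_eq_map_formPerm [DecidableEq V] {r : V} {l : List V}
    (h : (r :: l).Nodup) :
    (r :: l).zip (l ++ [r]) = (r :: l).map fun z => (z, (r :: l).formPerm z) := by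
  have hrot : (r :: l).rotate 1 = l ++ [r] := by simp
  apply ext_getElem (by simp)
  intro i h1 h2
  simp only [getElem_zip, getElem_map, formPerm_apply_getElem _ h, Prod.mk.injEq, true_and]
  rw [← getElem_rotate _ _ _ (by simpa using h2)]
  simp [hrot]

theorem isChain_cons_append_singleton_iff_formPerm [DecidableEq V] {R : V → V → Prop} {r : V}
    {l : List V} (h : (r :: l).Nodup) :
    IsChain R (r :: l ++ [r]) ↔ ∀ z ∈ r :: l, R z ((r :: l).formPerm z) := by
  rw [isChain_cons_append_singleton_iff_forall₂, forall₂_iff_zip,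
    zip_cons_append_singleton_eq_map_formPerm h]
  simp only [mem_map, Prod.mk.injEq, length_cons, length_append]
  constructor
  · exact fun hR z hz => hR.2 ⟨z, hz, rfl, rfl⟩
  · refine fun hR => ⟨rfl, ?_⟩
    rintro a b ⟨z, hz, rfl, rfl⟩
    exact hR z hz

theorem walkWeight_cons_append_singleton [DecidableEq V] {r : V} {l : List V}
    (h : (r :: l).Nodup) :
    walkWeight W (r :: l ++ [r]) = ∑ z ∈ (r :: l).toFinset, W z ((r :: l).formPerm z) := by
  rw [walkWeight_eq_sum_zip, sum_toFinset _ h, dropLast_concat, cons_append, tail_cons,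
    zip_cons_append_singleton_eq_map_formPerm h, map_map]
  rfl

end List

open Equiv Finset List

theorem exists_potential_of_cycle_nonneg {V : Type*} [Fintype V] [DecidableEq V]
    {Adj : V → V → Prop} {W : V → V → ℝ}
    (hcyc : ∀ c : List V, c.Nodup → (∀ z ∈ c, Adj z (c.formPerm z)) →
      0 ≤ ∑ z ∈ c.toFinset, W z (c.formPerm z)) :
    ∃ φ : V → ℝ, ∀ r r', Adj r r' → φ r' ≤ φ r + W r r' := by
  -- `-φ r` is the least weight of a simple walk starting at `r`; if prefixing `r` to the best walk
  -- from `r'` repeats `r`, the part before the repetition is a cycle.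
  set walks : V → Set (List V) := fun r => {P | P.Nodup ∧ P.IsChain Adj ∧ P.head? = some r}
  have hfin (r : V) : (walks r).Finite :=
    (finite_length_le V (Fintype.card V)).subset fun P hP => hP.1.length_le_card
  have hne (r : V) : (walks r).Nonempty := ⟨[r], by simp [walks]⟩
  choose P hP hPmin using fun r => Set.exists_min_image _ (walkWeight W) (hfin r) (hne r)
  refine ⟨fun r => -walkWeight W (P r), fun r r' hrr' => ?_⟩
  suffices walkWeight W (P r) ≤ W r r' + walkWeight W (P r') by linarith
  obtain ⟨hnd, hch, hhead⟩ := hP r'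
  obtain ⟨t, ht⟩ := head?_eq_some_iff.1 hhead
  rw [ht] at hnd hch ⊢
  have hwalk : IsChain Adj (r :: r' :: t) := isChain_cons_cons.2 ⟨hrr', hch⟩
  by_cases hr : r ∈ r' :: t
  · obtain ⟨s, u, hsu⟩ := append_of_mem hr
    rw [hsu] at hnd hch
    have hcnd : (r :: s).Nodup :=
      (nodup_middle.1 hnd).sublist ((sublist_append_left s u).cons_cons r)
    have hcch : IsChain Adj (r :: s ++ [r]) :=
      IsChain.left_of_append (l₂ := u) (by simpa [hsu] using hwalk)
    have hcycle := hcyc (r :: s) hcnd ((isChain_cons_append_singleton_iff_formPerm hcnd).1 hcch)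
    rw [← walkWeight_cons_append_singleton W hcnd] at hcycle
    have hmin := hPmin r (r :: u) ⟨hnd.sublist (sublist_append_right _ _), hch.right_of_append, rfl⟩
    have hsplit := walkWeight_append_cons W (r :: s) u r
    rw [cons_append, ← hsu, walkWeight_cons_cons] at hsplit
    linarith
  · simpa using hPmin r _ ⟨nodup_cons.2 ⟨hr, hnd⟩, hwalk, rfl⟩

theorem eq_add_of_le_add_of_sum_eq_zero {ι : Type*} [Fintype ι] (π : Perm ι) {φ w : ι → ℝ}
    (hle : ∀ j, φ (π j) ≤ φ j + w j) (hsum : ∑ j, w j = 0) (j : ι) :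
    φ (π j) = φ j + w j := by
  have hsum' : ∑ j, φ (π j) = ∑ j, (φ j + w j) := by
    rw [sum_add_distrib, hsum, add_zero, Equiv.sum_comp π φ]
  exact (sum_eq_sum_iff_of_le fun j _ => hle j).1 hsum' j (mem_univ j)

section Exchange

variable {ι : Type*} [Fintype ι] (c : ι → ι → ℝ) (σ : Perm ι)

def exchangeWeight (r r' : ι) : ℝ := c r' (σ r) - c r' (σ r')

variable {c σ}

theorem sum_exchangeWeight_nonneg
    (hσmin : ∀ σ' : Perm ι, (∀ i, σ' i ≠ i) → ∑ i, c i (σ i) ≤ ∑ i, c i (σ' i))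
    {τ : Perm ι} (hτ : ∀ z, τ z ≠ σ z) : 0 ≤ ∑ z, exchangeWeight c σ z (τ z) := by
  have hder : ∀ i, (σ * τ⁻¹) i ≠ i := fun i => by
    simpa [eq_comm] using hτ (τ⁻¹ i)
  have h := hσmin _ hder
  rw [← Equiv.sum_comp τ, ← Equiv.sum_comp τ (fun i => c i ((σ * τ⁻¹) i))] at h
  simpa [exchangeWeight, sum_sub_distrib] using h

theorem sum_exchangeWeight_formPerm_nonneg [DecidableEq ι] (hσ : ∀ i, σ i ≠ i)
    (hσmin : ∀ σ' : Perm ι, (∀ i, σ' i ≠ i) → ∑ i, c i (σ i) ≤ ∑ i, c i (σ' i))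
    {l : List ι} (hl : ∀ z ∈ l, σ z ≠ l.formPerm z) :
    0 ≤ ∑ z ∈ l.toFinset, exchangeWeight c σ z (l.formPerm z) := by
  have hτ (z : ι) : l.formPerm z ≠ σ z := by
    by_cases hz : z ∈ l
    · exact (hl z hz).symm
    · rw [List.formPerm_apply_of_notMem hz]; exact (hσ z).symm
  rw [sum_subset (subset_univ _) fun z _ hz => ?_]
  · exact sum_exchangeWeight_nonneg hσmin hτ
  · rw [List.formPerm_apply_of_notMem (by simpa using hz), exchangeWeight, sub_self]

theorem sum_exchangeWeight_apply_apply_eq_zero (hc : ∀ i j, c i j = c j i) :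
    ∑ j, exchangeWeight c σ j (σ (σ j)) = 0 := by
  rw [← sub_self (∑ i, c i (σ i))]
  simp only [exchangeWeight, sum_sub_distrib]
  congr 1
  · calc ∑ j, c (σ (σ j)) (σ j) = ∑ j, c (σ j) (σ (σ j)) := sum_congr rfl fun j _ => hc _ _
      _ = ∑ i, c i (σ i) := Equiv.sum_comp σ fun i => c i (σ i)
  · exact (Equiv.sum_comp σ fun i => c (σ i) (σ (σ i))).trans (Equiv.sum_comp σ fun i => c i (σ i))

end Exchange

theorem dist_le_dist_add_dist_of_minimal {ι X : Type*} [Fintype ι] [DecidableEq ι]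
    [PseudoMetricSpace X] {p : ι → X} {σ : Perm ι} (hσ : ∀ i, σ i ≠ i)
    (hσmin : ∀ σ' : Perm ι, (∀ i, σ' i ≠ i) →
      ∑ i, dist (p i) (p (σ i)) ≤ ∑ i, dist (p i) (p (σ' i)))
    {a u v : ι} (hua : u ≠ a) (huσ : u ≠ σ a) (hva : v ≠ a) (hvσ : v ≠ σ a) :
    dist (p a) (p (σ a)) ≤ dist (p a) (p u) + dist (p (σ a)) (p v) := by
  set c : ι → ι → ℝ := fun i j => dist (p i) (p j)
  obtain ⟨φ, hφ⟩ := exists_potential_of_cycle_nonneg (Adj := fun r r' => σ r ≠ r')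
    (W := exchangeWeight c σ) fun l _ hl => sum_exchangeWeight_formPerm_nonneg hσ hσmin hl
  have htight := eq_add_of_le_add_of_sum_eq_zero (σ * σ)
    (fun j => hφ j _ (σ.injective.ne (hσ j).symm))
    (sum_exchangeWeight_apply_apply_eq_zero fun i j => dist_comm (p i) (p j)) (σ⁻¹ a)
  have h1 := hφ (σ⁻¹ a) (σ⁻¹ u) (by simpa [eq_symm_apply] using huσ.symm)
  have h2 := hφ (σ⁻¹ u) a (by simpa using hua)
  have h3 := hφ a v hvσ.symm
  have h4 := hφ v (σ a) (σ.injective.ne hva)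
  simp only [exchangeWeight, c, Perm.mul_apply, Perm.coe_inv, apply_symm_apply]
    at htight h1 h2 h3 h4
  linarith [dist_triangle (p (σ.symm u)) (p u) (p a), dist_triangle (p (σ a)) (p v) (p (σ v)),
    dist_comm (p u) (p a), dist_comm (p v) (p (σ a)), dist_comm (p (σ a)) (p a)]

theorem min_cycle_cover_edges_in_nearest_neighbor_graph_general
    {X : Type*} [MetricSpace X] (n : ℕ) (p : Fin n → X)
    (δ : Fin n → ℝ)
    (hδmem : ∀ i, ∃ j, j ≠ i ∧ δ i = dist (p i) (p j))
    (σ : Equiv.Perm (Fin n)) (hσ : ∀ i, σ i ≠ i)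
    (hσmin : ∀ σ' : Equiv.Perm (Fin n), (∀ i, σ' i ≠ i) →
      ∑ i, dist (p i) (p (σ i)) ≤ ∑ i, dist (p i) (p (σ' i))) :
    ∀ i, dist (p i) (p (σ i)) ≤ δ i + δ (σ i) := by
  intro a
  obtain ⟨u, hua, hu⟩ := hδmem a
  obtain ⟨v, hvσ, hv⟩ := hδmem (σ a)
  rw [hu, hv]
  by_cases huσ : u = σ a
  · rw [huσ]
    linarith [dist_nonneg (x := p (σ a)) (y := p v)]
  by_cases hva : v = a
  · rw [hva, dist_comm]
    linarith [dist_nonneg (x := p a) (y := p u)]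
  exact dist_le_dist_add_dist_of_minimal hσ hσmin hua huσ hva hvσ

/-- Each edge of a minimum cycle cover of the complete geometric graph belongs
to the nearest-neighbor overlap graph: along a minimum-weight derangement `σ`,
the distance between consecutive points is at most the sum of their
nearest-neighbor distances. -/
theorem min_cycle_cover_edges_in_nearest_neighbor_graph
    {X : Type*} [MetricSpace X] (n : ℕ) (hn : 2 ≤ n) (p : Fin n → X)
    (δ : Fin n → ℝ)
    (hδle : ∀ i, ∀ j, j ≠ i → δ i ≤ dist (p i) (p j))
    (hδmem : ∀ i, ∃ j, j ≠ i ∧ δ i = dist (p i) (p j))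
    (σ : Equiv.Perm (Fin n)) (hσ : ∀ i, σ i ≠ i)
    (hσmin : ∀ σ' : Equiv.Perm (Fin n), (∀ i, σ' i ≠ i) →
      ∑ i, dist (p i) (p (σ i)) ≤ ∑ i, dist (p i) (p (σ' i))) :
    ∀ i, dist (p i) (p (σ i)) ≤ δ i + δ (σ i) :=
  min_cycle_cover_edges_in_nearest_neighbor_graph_general n p δ hδmem σ hσ hσmin
end

section
/- Let X be a metric space, n ≥ 2, and p : Fin n → X a family of points, with nearest-neighbor distances δ i = min over j ≠ i of dist (p i) (p j). Let r : Fin n → ℝ satisfy r i ≥ 0 for all i. Then r is a feasible system of radii (i.e., r i + r j ≤ dist (p i) (p j) for all i ≠ j) if and only if r i + r j ≤ dist (p i) (p j) holds for every pair i ≠ j with dist (p i) (p j) ≤ δ i + δ j. (A system of balls is nonoverlapping if and only if it is nonoverlapping along the edges of the nearest-neighbor overlap graph.) -/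
/-- A system of balls is nonoverlapping if and only if it is nonoverlapping
along the edges of the nearest-neighbor overlap graph. -/
theorem feasible_iff_nonoverlapping_on_nearest_neighbor_graph
    {X : Type*} [MetricSpace X] (n : ℕ) (hn : 2 ≤ n) (p : Fin n → X)
    (δ : Fin n → ℝ)
    (hδle : ∀ i, ∀ j, j ≠ i → δ i ≤ dist (p i) (p j))
    (hδmem : ∀ i, ∃ j, j ≠ i ∧ δ i = dist (p i) (p j))
    (r : Fin n → ℝ) (hr0 : ∀ i, 0 ≤ r i) :
    (∀ i j, i ≠ j → r i + r j ≤ dist (p i) (p j)) ↔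
      (∀ i j, i ≠ j → dist (p i) (p j) ≤ δ i + δ j →
        r i + r j ≤ dist (p i) (p j)) := by
  constructor
  · intro h i j hij _; exact h i j hij
  · intro h
    have hδ0 : ∀ i, 0 ≤ δ i := by
      intro i
      obtain ⟨j, hji, hj⟩ := hδmem i
      rw [hj]; exact dist_nonneg
    have hrδ : ∀ i, r i ≤ δ i := by
      intro i
      obtain ⟨j, hji, hj⟩ := hδmem i
      have hedge : dist (p i) (p j) ≤ δ i + δ j := by
        rw [← hj]; linarith [hδ0 j]
      have h1 := h i j (Ne.symm hji) hedge
      have h2 := hr0 j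
      rw [← hj] at h1
      linarith
    intro i j hij
    by_cases hc : dist (p i) (p j) ≤ δ i + δ j
    · exact h i j hij hc
    · push_neg at hc
      have := hrδ i
      have := hrδ j
      linarith
end

section
/- Let X be a metric space, n ≥ 2, and p : Fin n → X a family of points, and let D = max over pairs i, j of dist (p i) (p j) be the diameter of the point set. Then the infimum of ∑_i h i over all h : Fin n → ℝ with 0 ≤ h i for all i and dist (p i) (p j) ≤ h i + h j for all i ≠ j (non-contractive embeddings into a star metric, h i being the distance from point i to the hub) equals n·D minus the supremum of ∑_i r i over all r : Fin n → ℝ with 0 ≤ r i ≤ D for all i and r i + r j ≤ 2·D − dist (p i) (p j) for all i ≠ j (nonoverlapping balls for the modified distance d*(i,j) = 2·D − dist (p i) (p j)); the correspondence is h i = D − r i. -/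
/-- The minimum total hub distance of a non-contractive embedding of `n` points
into a star metric equals `n·D` minus the maximum total radius of a system of
nonoverlapping balls for the modified distance `d*(i,j) = 2·D − dist (p i) (p j)`,
where `D` is the diameter of the point set; the correspondence is `h i = D − r i`. -/
theorem star_embedding_eq_diameter_complement_radius_sum
    {X : Type*} [MetricSpace X] (n : ℕ) (hn : 2 ≤ n) (p : Fin n → X)
    (D : ℝ)
    (hDub : ∀ i j, dist (p i) (p j) ≤ D)
    (hDmem : ∃ i j, dist (p i) (p j) = D) :
    sInf {s : ℝ | ∃ h : Fin n → ℝ,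
        (∀ i, 0 ≤ h i) ∧
        (∀ i j, i ≠ j → dist (p i) (p j) ≤ h i + h j) ∧
        s = ∑ i, h i}
      = n * D -
        sSup {s : ℝ | ∃ r : Fin n → ℝ,
          (∀ i, 0 ≤ r i ∧ r i ≤ D) ∧
          (∀ i j, i ≠ j → r i + r j ≤ 2 * D - dist (p i) (p j)) ∧
          s = ∑ i, r i} := by
  have i0 : Fin n := ⟨0, by omega⟩
  have hD0 : (0 : ℝ) ≤ D := le_trans dist_nonneg (hDub i0 i0)
  set S : Set ℝ := {s : ℝ | ∃ h : Fin n → ℝ,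
        (∀ i, 0 ≤ h i) ∧
        (∀ i j, i ≠ j → dist (p i) (p j) ≤ h i + h j) ∧
        s = ∑ i, h i} with hS
  set T : Set ℝ := {s : ℝ | ∃ r : Fin n → ℝ,
          (∀ i, 0 ≤ r i ∧ r i ≤ D) ∧
          (∀ i j, i ≠ j → r i + r j ≤ 2 * D - dist (p i) (p j)) ∧
          s = ∑ i, r i} with hT
  have hSne : S.Nonempty := by
    refine ⟨∑ _i : Fin n, D, fun _ => D, fun i => hD0, fun i j _ => ?_, rfl⟩
    linarith [hDub i j]
  have hSbdd : BddBelow S := by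
    refine ⟨0, fun s hs => ?_⟩
    obtain ⟨h, h0, -, rfl⟩ := hs
    exact Finset.sum_nonneg fun i _ => h0 i
  have hTne : T.Nonempty := by
    refine ⟨0, fun _ => 0, fun i => ⟨le_refl 0, hD0⟩, fun i j _ => ?_, by simp⟩
    dsimp only; linarith [hDub i j]
  have hTbdd : BddAbove T := by
    refine ⟨n * D, fun t ht => ?_⟩
    obtain ⟨r, hr, -, rfl⟩ := ht
    calc ∑ i, r i ≤ ∑ _i : Fin n, D := Finset.sum_le_sum fun i _ => (hr i).2
      _ = n * D := by
        rw [Finset.sum_const, Finset.card_univ, Fintype.card_fin, nsmul_eq_mul]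
  -- direction 1 : sInf S ≤ n*D - sSup T
  have h1 : sSup T ≤ n * D - sInf S := by
    apply csSup_le hTne
    intro t ht
    obtain ⟨r, hr, hrd, rfl⟩ := ht
    have hmem : (∑ i, (D - r i)) ∈ S := by
      refine ⟨fun i => D - r i, fun i => by dsimp only; linarith [(hr i).2], fun i j hij => ?_, rfl⟩
      have := hrd i j hij
      dsimp only; linarith
    have hle := csInf_le hSbdd hmem
    have hsum : ∑ i, (D - r i) = n * D - ∑ i, r i := by
      rw [Finset.sum_sub_distrib, Finset.sum_const, Finset.card_univ,
        Fintype.card_fin, nsmul_eq_mul]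
    linarith [hsum ▸ hle]
  -- direction 2 : n*D - sSup T ≤ sInf S
  have h2 : n * D - sSup T ≤ sInf S := by
    apply le_csInf hSne
    intro s hs
    obtain ⟨h, h0, hhd, rfl⟩ := hs
    have hmem : (∑ i, (D - min (h i) D)) ∈ T := by
      refine ⟨fun i => D - min (h i) D, fun i =>
        ⟨by simp [min_le_right], by
          have : (0:ℝ) ≤ min (h i) D := le_min (h0 i) hD0
          dsimp only; linarith⟩, fun i j hij => ?_, rfl⟩
      have n1 : (0:ℝ) ≤ min (h i) D := le_min (h0 i) hD0
      have n2 : (0:ℝ) ≤ min (h j) D := le_min (h0 j) hD0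
      have key : dist (p i) (p j) ≤ min (h i) D + min (h j) D := by
        rcases le_total (h i) D with h1' | h1' <;> rcases le_total (h j) D with h2' | h2'
        · rw [min_eq_left h1', min_eq_left h2']; exact hhd i j hij
        · rw [min_eq_right h2']; linarith [hDub i j]
        · rw [min_eq_right h1']; linarith [hDub i j]
        · rw [min_eq_right h1', min_eq_right h2']; linarith [hDub i j]
      dsimp only; linarith
    have hle := le_csSup hTbdd hmem
    have hsum : ∑ i, (D - min (h i) D) = n * D - ∑ i, min (h i) D := by
      rw [Finset.sum_sub_distrib, Finset.sum_const, Finset.card_univ,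
        Fintype.card_fin, nsmul_eq_mul]
    have hmono : ∑ i, min (h i) D ≤ ∑ i, h i :=
      Finset.sum_le_sum fun i _ => min_le_left _ _
    linarith [hsum ▸ hle]
  linarith
end

section
/- Let X be a metric space, n ≥ 2, and p : Fin n → X a family of pairwise distinct points, and let δ > 0 satisfy 2·δ ≤ dist (p i) (p j) for all i ≠ j. Define E i j = dist (p i) (p j) − 2·δ, and let d*(i,j) be the shortest-path distance in the complete graph on Fin n with edge weights E (the minimum over walks from i to j with at least one step and consecutive vertices distinct of the total E-weight). Then: (a) a function s : Fin n → ℝ with s i ≥ 0 for all i satisfies s i + s j ≤ E i j for all i ≠ j if and only if it satisfies s i + s j ≤ d*(i,j) for all i ≠ j; and (b) a function r : Fin n → ℝ with r i ≥ δ for all i and r i + r j ≤ dist (p i) (p j) for all i ≠ j maximizes ∑_i r i among all such functions if and only if s i = r i − δ maximizes ∑_i s i among all nonnegative s with s i + s j ≤ d*(i,j) for all i ≠ j. In particular, the maximum sum of radii of nonoverlapping balls all of radius at least δ equals n·δ plus the maximum sum of radii of nonoverlapping balls for the metric d*. -/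
/-- Lower-bounding the radii: for points with pairwise distances at least `2·δ`,
let `E i j = dist (p i) (p j) − 2·δ` be the gap distance and `d*` its
shortest-path closure. Then (a) nonnegative shifted radii satisfy the pairwise
gap constraints iff they satisfy the shortest-path constraints; (b) a system of
radii all at least `δ` maximizes the radius sum iff the shifted radii
`s i = r i − δ` maximize the radius sum for `d*`; in particular the maximum
constrained radius sum equals `n·δ` plus the maximum radius sum for `d*`. -/
theorem constrained_radius_sum_via_shortest_paths
    {X : Type*} [MetricSpace X] (n : ℕ) (hn : 2 ≤ n) (p : Fin n → X)
    (hp : ∀ i j, i ≠ j → p i ≠ p j)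
    (δ : ℝ) (hδ : 0 < δ)
    (hδfeas : ∀ i j, i ≠ j → 2 * δ ≤ dist (p i) (p j))
    (E : Fin n → Fin n → ℝ)
    (hE : ∀ i j, E i j = dist (p i) (p j) - 2 * δ)
    (dstar : Fin n → Fin n → ℝ)
    (hdstar : ∀ i j, dstar i j = sInf {d : ℝ | ∃ (k : ℕ) (v : ℕ → Fin n),
      1 ≤ k ∧ v 0 = i ∧ v k = j ∧ (∀ t, t < k → v t ≠ v (t + 1)) ∧
      d = ∑ t ∈ Finset.range k, E (v t) (v (t + 1))}) :
    (∀ s : Fin n → ℝ, (∀ i, 0 ≤ s i) →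
      ((∀ i j, i ≠ j → s i + s j ≤ E i j) ↔
        (∀ i j, i ≠ j → s i + s j ≤ dstar i j))) ∧
    (∀ r : Fin n → ℝ, (∀ i, δ ≤ r i) →
      (∀ i j, i ≠ j → r i + r j ≤ dist (p i) (p j)) →
      ((∀ r' : Fin n → ℝ, (∀ i, δ ≤ r' i) →
          (∀ i j, i ≠ j → r' i + r' j ≤ dist (p i) (p j)) →
          ∑ i, r' i ≤ ∑ i, r i) ↔
        (∀ s' : Fin n → ℝ, (∀ i, 0 ≤ s' i) →
          (∀ i j, i ≠ j → s' i + s' j ≤ dstar i j) →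
          ∑ i, s' i ≤ ∑ i, (r i - δ)))) ∧
    sSup {s : ℝ | ∃ r : Fin n → ℝ, (∀ i, δ ≤ r i) ∧
        (∀ i j, i ≠ j → r i + r j ≤ dist (p i) (p j)) ∧ s = ∑ i, r i}
      = n * δ + sSup {s : ℝ | ∃ s' : Fin n → ℝ, (∀ i, 0 ≤ s' i) ∧
        (∀ i j, i ≠ j → s' i + s' j ≤ dstar i j) ∧ s = ∑ i, s' i} := by
  classical
  have hE0 : ∀ i j, i ≠ j → 0 ≤ E i j := by
    intro i j hij; rw [hE]; linarith [hδfeas i j hij]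
  have hne : ∀ i j : Fin n, i ≠ j → E i j ∈ {d : ℝ | ∃ (k : ℕ) (v : ℕ → Fin n),
      1 ≤ k ∧ v 0 = i ∧ v k = j ∧ (∀ t, t < k → v t ≠ v (t + 1)) ∧
      d = ∑ t ∈ Finset.range k, E (v t) (v (t + 1))} := by
    intro i j hij
    refine ⟨1, fun t => if t = 0 then i else j, le_refl 1, by simp, by simp, ?_, by simp⟩
    intro t ht
    interval_cases t
    simpa using hij
  have hbdd : ∀ i j : Fin n, BddBelow {d : ℝ | ∃ (k : ℕ) (v : ℕ → Fin n),
      1 ≤ k ∧ v 0 = i ∧ v k = j ∧ (∀ t, t < k → v t ≠ v (t + 1)) ∧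
      d = ∑ t ∈ Finset.range k, E (v t) (v (t + 1))} := by
    intro i j
    refine ⟨0, ?_⟩
    rintro d ⟨k, v, hk, hv0, hvk, hnev, rfl⟩
    exact Finset.sum_nonneg fun t ht => hE0 _ _ (hnev t (Finset.mem_range.mp ht))
  have hdleE : ∀ i j, i ≠ j → dstar i j ≤ E i j := by
    intro i j hij; rw [hdstar]; exact csInf_le (hbdd i j) (hne i j hij)
  have hkey : ∀ s : Fin n → ℝ, (∀ i, 0 ≤ s i) →
      (∀ i j, i ≠ j → s i + s j ≤ E i j) →
      ∀ i j, i ≠ j → s i + s j ≤ dstar i j := by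
    intro s hs hsE i j hij
    rw [hdstar]
    refine le_csInf ⟨_, hne i j hij⟩ ?_
    rintro d ⟨k, v, hk, hv0, hvk, hnev, rfl⟩
    have h1 : ∑ t ∈ Finset.range k, (s (v t) + s (v (t + 1))) ≤
        ∑ t ∈ Finset.range k, E (v t) (v (t + 1)) :=
      Finset.sum_le_sum fun t ht => hsE _ _ (hnev t (Finset.mem_range.mp ht))
    have h2 : s i ≤ ∑ t ∈ Finset.range k, s (v t) := by
      rw [← hv0]
      exact Finset.single_le_sum (f := fun t => s (v t)) (fun t _ => hs _)
        (Finset.mem_range.mpr hk)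
    have h3 : s j ≤ ∑ t ∈ Finset.range k, s (v (t + 1)) := by
      have hk1 : k - 1 + 1 = k := Nat.succ_pred_eq_of_pos hk
      have h := Finset.single_le_sum (f := fun t => s (v (t + 1))) (fun t _ => hs _)
        (Finset.mem_range.mpr (by omega : k - 1 < k))
      simp only [hk1, hvk] at h
      exact h
    have h4 : ∑ t ∈ Finset.range k, (s (v t) + s (v (t + 1))) =
        (∑ t ∈ Finset.range k, s (v t)) + ∑ t ∈ Finset.range k, s (v (t + 1)) :=
      Finset.sum_add_distrib
    linarith
  have sumδ : ∑ _i : Fin n, δ = n * δ := by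
    rw [Finset.sum_const, Finset.card_univ, Fintype.card_fin, nsmul_eq_mul]
  refine ⟨?_, ?_, ?_⟩
  · intro s hs
    exact ⟨fun h => hkey s hs h, fun h i j hij => le_trans (h i j hij) (hdleE i j hij)⟩
  · intro r hr hrfeas
    constructor
    · intro hmax s' hs' hs'd
      have hfeas' : ∀ i j, i ≠ j → (fun i => s' i + δ) i + (fun i => s' i + δ) j ≤
          dist (p i) (p j) := by
        intro i j hij
        dsimp only
        have := le_trans (hs'd i j hij) (hdleE i j hij)
        rw [hE] at this
        linarith
      have hsum := hmax (fun i => s' i + δ) (fun i => le_add_of_nonneg_left (hs' i)) hfeas'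
      simp only [Finset.sum_add_distrib, sumδ] at hsum
      rw [Finset.sum_sub_distrib, sumδ]
      linarith
    · intro hsmax r' hr' hr'feas
      have hs'' : ∀ i, 0 ≤ r' i - δ := fun i => by linarith [hr' i]
      have hE'' : ∀ i j, i ≠ j → (r' i - δ) + (r' j - δ) ≤ E i j := by
        intro i j hij; rw [hE]; linarith [hr'feas i j hij]
      have := hsmax (fun i => r' i - δ) hs'' (hkey _ hs'' hE'')
      simp only [Finset.sum_sub_distrib, sumδ] at this
      linarith
  · set A := {s : ℝ | ∃ r : Fin n → ℝ, (∀ i, δ ≤ r i) ∧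
        (∀ i j, i ≠ j → r i + r j ≤ dist (p i) (p j)) ∧ s = ∑ i, r i} with hA
    set B := {s : ℝ | ∃ s' : Fin n → ℝ, (∀ i, 0 ≤ s' i) ∧
        (∀ i j, i ≠ j → s' i + s' j ≤ dstar i j) ∧ s = ∑ i, s' i} with hB
    have hcard : 1 < Fintype.card (Fin n) := by rw [Fintype.card_fin]; omega
    obtain ⟨o, ho⟩ : ∃ o : Fin n → Fin n, ∀ i, o i ≠ i := by
      refine ⟨fun i => (Fintype.exists_ne_of_one_lt_card hcard i).choose, fun i =>
        (Fintype.exists_ne_of_one_lt_card hcard i).choose_spec⟩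
    have hAne : A.Nonempty := by
      refine ⟨∑ _i : Fin n, δ, fun _ => δ, fun i => le_refl δ, ?_, rfl⟩
      intro i j hij
      dsimp only
      linarith [hδfeas i j hij]
    have hBne : B.Nonempty := by
      refine ⟨0, fun _ => 0, fun _ => le_rfl, ?_, by simp⟩
      intro i j hij
      have h := hkey (fun _ => 0) (fun _ => le_rfl)
        (fun i j hij => by simpa using hE0 i j hij) i j hij
      simpa using h
    have hBbdd : BddAbove B := by
      refine ⟨∑ i, E i (o i), ?_⟩
      rintro b ⟨s', hs', hs'd, rfl⟩
      refine Finset.sum_le_sum fun i _ => ?_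
      have h1 := le_trans (hs'd i (o i) (ho i).symm) (hdleE i (o i) (ho i).symm)
      linarith [hs' (o i)]
    have hmemB : ∀ r : Fin n → ℝ, (∀ i, δ ≤ r i) →
        (∀ i j, i ≠ j → r i + r j ≤ dist (p i) (p j)) →
        (∑ i, (r i - δ)) ∈ B := by
      intro r hr hrfeas
      refine ⟨fun i => r i - δ, fun i => sub_nonneg.mpr (hr i), ?_, rfl⟩
      refine hkey _ (fun i => sub_nonneg.mpr (hr i)) ?_
      intro i j hij; rw [hE]; linarith [hrfeas i j hij]
    have hmemA : ∀ s' : Fin n → ℝ, (∀ i, 0 ≤ s' i) →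
        (∀ i j, i ≠ j → s' i + s' j ≤ dstar i j) →
        (∑ i, (s' i + δ)) ∈ A := by
      intro s' hs' hs'd
      refine ⟨fun i => s' i + δ, fun i => le_add_of_nonneg_left (hs' i), ?_, rfl⟩
      intro i j hij
      dsimp only
      have := le_trans (hs'd i j hij) (hdleE i j hij)
      rw [hE] at this
      linarith
    have hAbdd : BddAbove A := by
      obtain ⟨C, hC⟩ := hBbdd
      refine ⟨n * δ + C, ?_⟩
      rintro a ⟨r, hr, hrfeas, rfl⟩
      have := hC (hmemB r hr hrfeas)
      rw [Finset.sum_sub_distrib, sumδ] at this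
      linarith
    apply le_antisymm
    · refine csSup_le hAne ?_
      rintro a ⟨r, hr, hrfeas, rfl⟩
      have h1 := le_csSup hBbdd (hmemB r hr hrfeas)
      rw [Finset.sum_sub_distrib, sumδ] at h1
      linarith
    · have h2 : sSup B ≤ sSup A - n * δ := by
        refine csSup_le hBne ?_
        rintro b ⟨s', hs', hs'd, rfl⟩
        have h1 := le_csSup hAbdd (hmemA s' hs' hs'd)
        rw [Finset.sum_add_distrib, sumδ] at h1
        linarith
      linarith
end
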